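/- arXiv:0704.3995 — 8 statements merged into one kernel-verified Lean document; each statement's English description precedes it below -/
import Mathlib

section
/- Let p be a prime, X = Z_p[t,t^{-1}]/(g(t)), n a positive integer, and a_i = p^{m_i} for nonnegative integers m_i (i = 1, ..., n-1). Define f : X^n → X by f(x_1, ..., x_n) = (x_1 - x_2)^{a_1} (x_2 - x_3)^{a_2} ··· (x_{n-1} - x_n)^{a_{n-1}}. Then f is a quandle n-cocycle of the Alexander quandle X with coefficients in X; that is, δf = 0 and f vanishes on degenerate tuples (x_i = x_{i+1} for some i). -/
/-!
Each `x ↦ x ^ p ^ mⱼ` is a ring endomorphism `φⱼ` of `X`, because `p = 0` in `X`, so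
`f x = ∏ⱼ φⱼ (dⱼ)` with `dⱼ = xⱼ - xⱼ₊₁`. In the face of the coboundary indexed by `k + 1`,
deleting `xₖ₊₁` merges the adjacent differences `dₖ + dₖ₊₁`, and acting by `* xₖ₊₁` multiplies
the earlier differences by `t`. Additivity of `φₖ` therefore splits that face as
`Qₛ (k + 1) + Qₛ k`, where `Qₛ l = ∏_{j < l} φⱼ(s) φⱼ(dⱼ) · ∏_{j ≥ l} φⱼ(dⱼ₊₁)` with `s = 1` or
`s = t`, and the alternating sum telescopes to `Q₁ 0 - Qₜ 0 = 0`.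
-/

open LaurentPolynomial Finset

theorem prod_ite_lt_ite_eq_add {M : Type*} [CommSemiring M] {n : ℕ} (u v : Fin n → M) {k : ℕ}
    (hk : k < n) :
    ∏ j : Fin n, (if (j : ℕ) < k then u j else if (j : ℕ) = k then u j + v j else v j) =
      (∏ j : Fin n, if (j : ℕ) < k + 1 then u j else v j) +
        ∏ j : Fin n, if (j : ℕ) < k then u j else v j := by
  have hrest : ∀ w : Fin n → M, (∀ j : Fin n, (j : ℕ) ≠ k →
      w j = if (j : ℕ) < k then u j else v j) →
      ∏ j, w j =
        w ⟨k, hk⟩ * ∏ j ∈ ({⟨k, hk⟩}ᶜ : Finset (Fin n)), if (j : ℕ) < k then u j else v j := by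
    intro w hw
    rw [Fintype.prod_eq_mul_prod_compl ⟨k, hk⟩]
    congr 1
    refine prod_congr rfl fun j hj => hw j fun h => ?_
    simp [Fin.ext_iff, h] at hj
  rw [hrest _ fun j hj => by simp [hj],
    hrest _ fun j hj => by simp only [show (j : ℕ) < k + 1 ↔ (j : ℕ) < k by omega],
    hrest _ fun _ _ => rfl]
  simp [add_mul]

theorem sum_range_neg_one_pow_mul_add {A : Type*} [CommRing A] (S : ℕ → A) (N : ℕ) :
    ∑ k ∈ range N, (-1 : A) ^ k * (S k + S (k + 1)) = S 0 - (-1) ^ N * S N := by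
  calc ∑ k ∈ range N, (-1 : A) ^ k * (S k + S (k + 1))
      = ∑ k ∈ range N, ((-1 : A) ^ k * S k - (-1) ^ (k + 1) * S (k + 1)) :=
        sum_congr rfl fun k _ => by ring
    _ = S 0 - (-1) ^ N * S N := by rw [sum_range_sub', pow_zero, one_mul]

section AlexanderCocycle

variable {A : Type*} [CommRing A] {n : ℕ}

/-- Indices are 0-based, so the paper's sum over `2 ≤ i ≤ n + 2` runs over `1 ≤ i` here. -/
def quandleCoboundary {Q : Type*} (op : Q → Q → Q) (f : (Fin (n + 1) → Q) → A)
    (x : Fin (n + 2) → Q) : A :=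
  ∑ i : Fin (n + 2), if 1 ≤ (i : ℕ) then
    (-1 : A) ^ ((i : ℕ) + 1) *
      (f (fun j => if (j : ℕ) < i then x j.castSucc else x j.succ)
        - f (fun j => if (j : ℕ) < i then op (x j.castSucc) (x i) else x j.succ))
  else 0

/-- For `s = 1` this deletes `x i`; for `s = t` it is the second face of the coboundary of the
Alexander quandle. -/
def alexanderFace (s : A) (x : Fin (n + 2) → A) (i : Fin (n + 2)) : Fin (n + 1) → A :=
  fun j => if (j : ℕ) < i then s * x j.castSucc + (1 - s) * x i else x j.succ

def adjDiff (x : Fin (n + 1) → A) (j : Fin n) : A := x j.castSucc - x j.succ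

def diffProd (φ : Fin n → A →+* A) (x : Fin (n + 1) → A) : A := ∏ j, φ j (adjDiff x j)

theorem adjDiff_alexanderFace_succ (s : A) (x : Fin (n + 2) → A) (k : Fin (n + 1)) (j : Fin n) :
    adjDiff (alexanderFace s x k.succ) j =
      if (j : ℕ) < k then s * adjDiff x j.castSucc
      else if (j : ℕ) = k then s * adjDiff x j.castSucc + adjDiff x j.succ
      else adjDiff x j.succ := by
  simp only [adjDiff, alexanderFace, Fin.val_castSucc, Fin.val_succ, Fin.succ_castSucc]
  rcases lt_trichotomy (j : ℕ) k with h | h | h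
  · rw [if_pos (by omega), if_pos (by omega), if_pos h]
    ring
  · obtain rfl : k = j.castSucc := Fin.ext h.symm
    rw [if_pos (by omega), if_neg (by simp), if_neg (by simp), if_pos h, Fin.succ_castSucc]
    ring
  · rw [if_neg (by omega), if_neg (by omega), if_neg (by omega), if_neg (by omega)]

theorem diffProd_alexanderFace_succ (φ : Fin n → A →+* A) (s : A) (x : Fin (n + 2) → A)
    (k : Fin (n + 1)) :
    diffProd φ (alexanderFace s x k.succ) =
      ∏ j : Fin n, if (j : ℕ) < k then φ j s * φ j (adjDiff x j.castSucc)
        else if (j : ℕ) = k then φ j s * φ j (adjDiff x j.castSucc) + φ j (adjDiff x j.succ)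
        else φ j (adjDiff x j.succ) := by
  refine prod_congr rfl fun j _ => ?_
  rw [adjDiff_alexanderFace_succ]
  split_ifs <;> simp only [map_add, map_mul]

theorem quandleCoboundary_alexander_diffProd_eq_zero (t : A) (φ : Fin n → A →+* A)
    (x : Fin (n + 2) → A) :
    quandleCoboundary (fun a b => t * a + (1 - t) * b) (diffProd φ) x = 0 := by
  set Q : A → ℕ → A := fun s l => ∏ j : Fin n,
    if (j : ℕ) < l then φ j s * φ j (adjDiff x j.castSucc) else φ j (adjDiff x j.succ)
  set S : ℕ → A := fun l => Q 1 l - Q t l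
  have hface : ∀ i : Fin (n + 2),
      (fun j : Fin (n + 1) => if (j : ℕ) < i then x j.castSucc else x j.succ) =
        alexanderFace 1 x i := by
    intro i; funext j; simp [alexanderFace]
  have hface' : ∀ i : Fin (n + 2), (fun j : Fin (n + 1) =>
      if (j : ℕ) < i then t * x j.castSucc + (1 - t) * x i else x j.succ) =
      alexanderFace t x i := fun _ => rfl
  have hmid : ∀ s (k : Fin n),
      diffProd φ (alexanderFace s x k.castSucc.succ) = Q s (k + 1) + Q s k := by
    intro s k
    rw [diffProd_alexanderFace_succ, Fin.val_castSucc]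
    exact prod_ite_lt_ite_eq_add _ _ k.isLt
  have hlast : ∀ s, diffProd φ (alexanderFace s x (Fin.last n).succ) = Q s n := by
    intro s
    rw [diffProd_alexanderFace_succ]
    refine prod_congr rfl fun j _ => ?_
    simp [j.isLt]
  unfold quandleCoboundary
  simp only [hface, hface']
  rw [Fin.sum_univ_succ, Fin.sum_univ_castSucc]
  simp only [hmid, hlast, Fin.val_zero, Fin.val_succ, Fin.val_castSucc, Fin.val_last,
    nonpos_iff_eq_zero, one_ne_zero, ↓reduceIte, le_add_iff_nonneg_left, zero_le, zero_add]
  have hS0 : S 0 = 0 := by simp [S, Q]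
  have hsum : ∑ k : Fin n, (-1 : A) ^ ((k : ℕ) + 1 + 1) *
      (Q 1 (k + 1) + Q 1 k - (Q t (k + 1) + Q t k)) =
      ∑ k ∈ range n, (-1 : A) ^ k * (S k + S (k + 1)) := by
    rw [← Fin.sum_univ_eq_sum_range]
    exact sum_congr rfl fun k _ => by ring
  rw [hsum, sum_range_neg_one_pow_mul_add, hS0]
  ring

theorem diffProd_eq_zero_of_adj (φ : Fin n → A →+* A) (x : Fin (n + 1) → A) {i j : Fin (n + 1)}
    (hij : (j : ℕ) = i + 1) (hx : x i = x j) : diffProd φ x = 0 := by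
  refine prod_eq_zero (mem_univ ⟨i, by omega⟩) ?_
  rw [adjDiff, show Fin.castSucc ⟨i, _⟩ = i from rfl, show Fin.succ ⟨(i : ℕ), _⟩ = j from
    Fin.ext hij.symm, hx, sub_self, map_zero]

end AlexanderCocycle

theorem add_pow_prime_pow_of_natCast_eq_zero {R : Type*} [CommRing R] {p : ℕ} (hp : p.Prime)
    (hR : (p : R) = 0) (x y : R) (k : ℕ) : (x + y) ^ p ^ k = x ^ p ^ k + y ^ p ^ k := by
  rw [add_pow_prime_pow_eq hp, hR, zero_mul, zero_mul, zero_mul, add_zero]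

/-- The iterated Frobenius `x ↦ x ^ p ^ k`; unlike `iterateFrobenius` it needs no `ExpChar`
instance, so it also covers the zero ring. -/
def powPrimePowHom {R : Type*} [CommRing R] {p : ℕ} (hp : p.Prime) (hR : (p : R) = 0) (k : ℕ) :
    R →+* R :=
  RingHom.mk' (powMonoidHom (p ^ k)) (add_pow_prime_pow_of_natCast_eq_zero hp hR · · k)

/-- the polynomial expression
`f(x₁,…,xₙ) = (x₁-x₂)^{a₁} ⋯ (x_{n-1}-x_n)^{a_{n-1}}` with `aᵢ = p^{mᵢ}` is a
quandle n-cocycle of the Alexander quandle `X = Z_p[t,t⁻¹]/(g(t))` with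
coefficients in `X`.  Here the paper's positive integer `n` is `n+1`. -/
theorem stmt0 (p : ℕ) (hp : p.Prime) (g : LaurentPolynomial (ZMod p))
    (n : ℕ) (m : Fin n → ℕ) :
    let X := LaurentPolynomial (ZMod p) ⧸ Ideal.span {g}
    let t : X := Ideal.Quotient.mk (Ideal.span {g}) (T 1)
    let op : X → X → X := fun x y => t * x + (1 - t) * y
    let f : (Fin (n + 1) → X) → X :=
      fun x => ∏ i : Fin n, (x i.castSucc - x i.succ) ^ (p ^ m i)
    -- δf = 0 :
    (∀ x : Fin (n + 2) → X,
      (∑ i : Fin (n + 2), if 1 ≤ (i : ℕ) then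
        ((-1 : X) ^ ((i : ℕ) + 1)) *
          (f (fun j : Fin (n + 1) =>
              if (j : ℕ) < (i : ℕ) then x j.castSucc else x j.succ)
           - f (fun j : Fin (n + 1) =>
              if (j : ℕ) < (i : ℕ) then op (x j.castSucc) (x i) else x j.succ))
        else 0) = 0)
    -- f vanishes on degenerate tuples :
    ∧ (∀ x : Fin (n + 1) → X, ∀ i j : Fin (n + 1),
        (j : ℕ) = (i : ℕ) + 1 → x i = x j → f x = 0) := by
  intro X t op f
  have hpX : (p : X) = 0 := by
    rw [← map_natCast (algebraMap (ZMod p) X), ZMod.natCast_self, map_zero]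
  let φ : Fin n → X →+* X := fun i => powPrimePowHom hp hpX (m i)
  exact ⟨fun x => quandleCoboundary_alexander_diffProd_eq_zero t φ x,
    fun x _ _ hij hx => diffProd_eq_zero_of_adj φ x hij hx⟩
end

section
/- Let p be a prime, X = Z_p[t,t^{-1}]/(g(t)), n a positive integer, and a_i = p^{m_i} for nonnegative integers m_i (i = 1, ..., n), with a_n = p^{m_n}, m_n a positive integer. Define f : X^n → X by f(x_1, ..., x_n) = (x_1 - x_2)^{a_1} ··· (x_{n-1} - x_n)^{a_{n-1}} · x_n^{a_n}. If g(t) divides 1 - t^a in Z_p[t,t^{-1}], where a = a_1 + a_2 + ··· + a_n, then f is a quandle n-cocycle of the Alexander quandle X with coefficients in X. -/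
open LaurentPolynomial Finset

private def Mdef (n : ℕ) (m : Fin n → ℕ) (mn : ℕ) : ℕ → ℕ :=
  fun j => if h : j < n then m ⟨j, h⟩ else mn

private def xN {X : Type*} [Zero X] {n : ℕ} (x : Fin (n + 2) → X) : ℕ → X :=
  fun k => if h : k < n + 2 then x ⟨k, h⟩ else 0

private def uN {X : Type*} [CommRing X] {n : ℕ} (x : Fin (n + 2) → X) : ℕ → X :=
  fun k => xN x k - xN x (k + 1)

private def FbN {X : Type*} [CommRing X] {n : ℕ} (x : Fin (n + 2) → X) : ℕ → X :=
  fun j => if j < n then uN x (j + 1) else xN x (n + 1)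

private def CcN {X : Type*} [CommRing X] {n : ℕ} (p mn : ℕ) (m : Fin n → ℕ)
    (x : Fin (n + 2) → X) (k : ℕ) : X :=
  ∏ j ∈ Finset.range (n + 1), (if j < k then uN x j else FbN x j) ^ p ^ Mdef n m mn j

private def AaN (p n mn : ℕ) (m : Fin n → ℕ) (k : ℕ) : ℕ :=
  ∑ j ∈ Finset.range (n + 1), if j < k then p ^ Mdef n m mn j else 0

private def Bdef {X : Type*} [CommRing X] {n : ℕ} (p mn : ℕ) (m : Fin n → ℕ) (t : X)
    (x : Fin (n + 2) → X) (k : ℕ) : X :=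
  if 1 ≤ k then
    (-1 : X) ^ (k + 1) *
      ((∏ j ∈ Finset.range n,
          ((if j < k then xN x j else xN x (j + 1)) -
            (if j + 1 < k then xN x (j + 1) else xN x (j + 1 + 1))) ^ p ^ Mdef n m mn j) *
        (if n < k then xN x n else xN x (n + 1)) ^ p ^ Mdef n m mn n -
       (∏ j ∈ Finset.range n,
          ((if j < k then t * xN x j + (1 - t) * xN x k else xN x (j + 1)) -
            (if j + 1 < k then t * xN x (j + 1) + (1 - t) * xN x k
              else xN x (j + 1 + 1))) ^ p ^ Mdef n m mn j) *
        (if n < k then t * xN x n + (1 - t) * xN x k else xN x (n + 1)) ^ p ^ Mdef n m mn n)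
  else 0

private lemma tele {X : Type*} [CommRing X] (T : ℕ → X) :
    ∀ N, ∑ k ∈ Finset.range N, (-1 : X) ^ k * (T (k + 1) + T k)
      = T 0 - (-1 : X) ^ N * T N
  | 0 => by simp
  | (N + 1) => by
      rw [Finset.sum_range_succ, tele T N, pow_succ]
      ring

private lemma AA_succ (n : ℕ) (aa : ℕ → ℕ) (i : ℕ) (h1 : 1 ≤ i) (h2 : i ≤ n + 1) :
    (∑ j ∈ Finset.range (n + 1), if j < i then aa j else 0)
      = (∑ j ∈ Finset.range (n + 1), if j < i - 1 then aa j else 0) + aa (i - 1) := by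
  have hi1 : i - 1 ∈ Finset.range (n + 1) := Finset.mem_range.2 (by omega)
  rw [← Finset.sum_erase_add _ _ hi1,
      ← Finset.sum_erase_add _ (fun j => if j < i - 1 then aa j else 0) hi1]
  rw [if_pos (show i - 1 < i by omega), if_neg (lt_irrefl (i - 1)), add_zero]
  congr 1
  refine Finset.sum_congr rfl fun j hj => ?_
  obtain ⟨hne, _⟩ := Finset.mem_erase.1 hj
  by_cases h : j < i - 1
  · rw [if_pos h, if_pos (by omega)]
  · rw [if_neg (by omega), if_neg h]

private lemma keyGen {X : Type*} [CommRing X] (p : ℕ) [Fact p.Prime] [CharP X p]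
    (n : ℕ) (M : ℕ → ℕ) (s : X) (u Fb : ℕ → X) (D : ℕ → X) (i : ℕ)
    (h1 : 1 ≤ i) (h2 : i ≤ n + 1)
    (hlt : ∀ j, j < i - 1 → D j = s * u j)
    (hmid : D (i - 1) = s * u (i - 1) + Fb (i - 1))
    (hgt : ∀ j, i ≤ j → j ≤ n → D j = Fb j) :
    ∏ j ∈ Finset.range (n + 1), D j ^ p ^ M j
      = s ^ (∑ j ∈ Finset.range (n + 1), if j < i - 1 then p ^ M j else 0) *
        (s ^ p ^ M (i - 1) *
            ∏ j ∈ Finset.range (n + 1), (if j < i then u j else Fb j) ^ p ^ M j +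
          ∏ j ∈ Finset.range (n + 1), (if j < i - 1 then u j else Fb j) ^ p ^ M j) := by
  have hi1 : i - 1 ∈ Finset.range (n + 1) := Finset.mem_range.2 (by omega)
  rw [← Finset.prod_erase_mul _ (fun j => D j ^ p ^ M j) hi1,
      ← Finset.prod_erase_mul _ (fun j => (if j < i then u j else Fb j) ^ p ^ M j) hi1,
      ← Finset.prod_erase_mul _ (fun j => (if j < i - 1 then u j else Fb j) ^ p ^ M j) hi1]
  rw [if_pos (show i - 1 < i by omega), if_neg (lt_irrefl (i - 1))]
  have e1 : ∏ j ∈ (Finset.range (n + 1)).erase (i - 1), (if j < i then u j else Fb j) ^ p ^ M j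
      = ∏ j ∈ (Finset.range (n + 1)).erase (i - 1),
          (if j < i - 1 then u j else Fb j) ^ p ^ M j := by
    refine Finset.prod_congr rfl fun j hj => ?_
    obtain ⟨hne, hjr⟩ := Finset.mem_erase.1 hj
    by_cases h : j < i - 1
    · rw [if_pos h, if_pos (by omega)]
    · rw [if_neg (by omega), if_neg h]
  have e2 : ∏ j ∈ (Finset.range (n + 1)).erase (i - 1), D j ^ p ^ M j
      = (∏ j ∈ (Finset.range (n + 1)).erase (i - 1), (if j < i - 1 then s else 1) ^ p ^ M j) *
        ∏ j ∈ (Finset.range (n + 1)).erase (i - 1),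
          (if j < i - 1 then u j else Fb j) ^ p ^ M j := by
    rw [← Finset.prod_mul_distrib]
    refine Finset.prod_congr rfl fun j hj => ?_
    obtain ⟨hne, hjr⟩ := Finset.mem_erase.1 hj
    rw [Finset.mem_range] at hjr
    by_cases h : j < i - 1
    · rw [hlt j h, if_pos h, if_pos h, mul_pow]
    · rw [hgt j (by omega) (by omega), if_neg h, if_neg h, one_pow, one_mul]
  have e3 : ∏ j ∈ (Finset.range (n + 1)).erase (i - 1), (if j < i - 1 then s else 1) ^ p ^ M j
      = s ^ (∑ j ∈ Finset.range (n + 1), if j < i - 1 then p ^ M j else 0) := by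
    have congr1 : ∀ j ∈ (Finset.range (n + 1)).erase (i - 1),
        (if j < i - 1 then s else 1) ^ p ^ M j = s ^ (if j < i - 1 then p ^ M j else 0) := by
      intro j _
      by_cases h : j < i - 1
      · rw [if_pos h, if_pos h]
      · rw [if_neg h, if_neg h, pow_zero, one_pow]
    rw [Finset.prod_congr rfl congr1, Finset.prod_pow_eq_pow_sum]
    congr 1
    exact Finset.sum_erase _ (if_neg (lt_irrefl (i - 1)))
  have e6 : D (i - 1) ^ p ^ M (i - 1)
      = s ^ p ^ M (i - 1) * u (i - 1) ^ p ^ M (i - 1) + Fb (i - 1) ^ p ^ M (i - 1) := by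
    rw [hmid, add_pow_char_pow, mul_pow]
  rw [e2, e3, e1, e6]
  ring

private lemma hy {X : Type*} [CommRing X] (p : ℕ) [Fact p.Prime] [CharP X p]
    {n : ℕ} (mn : ℕ) (m : Fin n → ℕ) (x : Fin (n + 2) → X) (k : ℕ) (hk : k ≤ n) :
    (∏ j ∈ Finset.range n,
        ((if j < k + 1 then xN x j else xN x (j + 1)) -
          (if j + 1 < k + 1 then xN x (j + 1) else xN x (j + 1 + 1))) ^ p ^ Mdef n m mn j) *
      (if n < k + 1 then xN x n else xN x (n + 1)) ^ p ^ Mdef n m mn n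
    = CcN p mn m x (k + 1) + CcN p mn m x k := by
  set D : ℕ → X := (fun j => if j < n then
      ((if j < k + 1 then xN x j else xN x (j + 1)) -
        (if j + 1 < k + 1 then xN x (j + 1) else xN x (j + 1 + 1)))
    else (if n < k + 1 then xN x n else xN x (n + 1))) with hD
  have hlt : ∀ j, j < k + 1 - 1 → D j = 1 * uN x j := by
    intro j hj
    simp only [hD]
    rw [if_pos (show j < n by omega), if_pos (show j < k + 1 by omega),
        if_pos (show j + 1 < k + 1 by omega), one_mul]
    rfl
  have hmid : D (k + 1 - 1) = 1 * uN x (k + 1 - 1) + FbN x (k + 1 - 1) := by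
    show D k = 1 * uN x k + FbN x k
    by_cases hkn : k < n
    · simp only [hD]
      rw [if_pos hkn, if_pos (show k < k + 1 by omega), if_neg (lt_irrefl (k + 1)), one_mul]
      unfold uN FbN
      rw [if_pos hkn]
      unfold uN
      ring
    · have hkn' : k = n := by omega
      subst hkn'
      simp only [hD]
      rw [if_neg (lt_irrefl k), if_pos (show k < k + 1 by omega), one_mul]
      unfold uN FbN
      rw [if_neg (lt_irrefl k)]
      ring
  have hgt : ∀ j, k + 1 ≤ j → j ≤ n → D j = FbN x j := by
    intro j h1 h2
    by_cases hjn : j < n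
    · simp only [hD]
      rw [if_pos hjn, if_neg (show ¬ j < k + 1 by omega), if_neg (show ¬ j + 1 < k + 1 by omega)]
      unfold FbN
      rw [if_pos hjn]
      rfl
    · have hj' : j = n := by omega
      subst hj'
      simp only [hD]
      rw [if_neg hjn, if_neg (show ¬ j < k + 1 by omega)]
      unfold FbN
      rw [if_neg hjn]
  have key := keyGen p n (Mdef n m mn) (1 : X) (uN x) (FbN x) D (k + 1)
    (by omega) (by omega) hlt hmid hgt
  have hsplit : ∏ j ∈ Finset.range (n + 1), D j ^ p ^ Mdef n m mn j
      = (∏ j ∈ Finset.range n,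
          ((if j < k + 1 then xN x j else xN x (j + 1)) -
            (if j + 1 < k + 1 then xN x (j + 1) else xN x (j + 1 + 1))) ^ p ^ Mdef n m mn j) *
        (if n < k + 1 then xN x n else xN x (n + 1)) ^ p ^ Mdef n m mn n := by
    rw [Finset.prod_range_succ]
    congr 1
    · refine Finset.prod_congr rfl fun j hj => ?_
      simp only [hD]
      rw [if_pos (Finset.mem_range.1 hj)]
    · simp only [hD]
      rw [if_neg (lt_irrefl n)]
  rw [← hsplit, key]
  simp only [one_pow, one_mul]
  rfl

private lemma hz {X : Type*} [CommRing X] (p : ℕ) [Fact p.Prime] [CharP X p]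
    {n : ℕ} (mn : ℕ) (m : Fin n → ℕ) (t : X) (x : Fin (n + 2) → X) (k : ℕ) (hk : k ≤ n) :
    (∏ j ∈ Finset.range n,
        ((if j < k + 1 then t * xN x j + (1 - t) * xN x (k + 1) else xN x (j + 1)) -
          (if j + 1 < k + 1 then t * xN x (j + 1) + (1 - t) * xN x (k + 1)
            else xN x (j + 1 + 1))) ^ p ^ Mdef n m mn j) *
      (if n < k + 1 then t * xN x n + (1 - t) * xN x (k + 1)
        else xN x (n + 1)) ^ p ^ Mdef n m mn n
    = t ^ AaN p n mn m (k + 1) * CcN p mn m x (k + 1) + t ^ AaN p n mn m k * CcN p mn m x k := by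
  set D : ℕ → X := (fun j => if j < n then
      ((if j < k + 1 then t * xN x j + (1 - t) * xN x (k + 1) else xN x (j + 1)) -
        (if j + 1 < k + 1 then t * xN x (j + 1) + (1 - t) * xN x (k + 1) else xN x (j + 1 + 1)))
    else (if n < k + 1 then t * xN x n + (1 - t) * xN x (k + 1) else xN x (n + 1))) with hD
  have hlt : ∀ j, j < k + 1 - 1 → D j = t * uN x j := by
    intro j hj
    simp only [hD]
    rw [if_pos (show j < n by omega), if_pos (show j < k + 1 by omega),
        if_pos (show j + 1 < k + 1 by omega)]
    unfold uN
    ring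
  have hmid : D (k + 1 - 1) = t * uN x (k + 1 - 1) + FbN x (k + 1 - 1) := by
    show D k = t * uN x k + FbN x k
    by_cases hkn : k < n
    · simp only [hD]
      rw [if_pos hkn, if_pos (show k < k + 1 by omega), if_neg (lt_irrefl (k + 1))]
      unfold uN FbN
      rw [if_pos hkn]
      unfold uN
      ring
    · have hkn' : k = n := by omega
      subst hkn'
      simp only [hD]
      rw [if_neg (lt_irrefl k), if_pos (show k < k + 1 by omega)]
      unfold uN FbN
      rw [if_neg (lt_irrefl k)]
      ring
  have hgt : ∀ j, k + 1 ≤ j → j ≤ n → D j = FbN x j := by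
    intro j h1 h2
    by_cases hjn : j < n
    · simp only [hD]
      rw [if_pos hjn, if_neg (show ¬ j < k + 1 by omega), if_neg (show ¬ j + 1 < k + 1 by omega)]
      unfold FbN
      rw [if_pos hjn]
      rfl
    · have hj' : j = n := by omega
      subst hj'
      simp only [hD]
      rw [if_neg hjn, if_neg (show ¬ j < k + 1 by omega)]
      unfold FbN
      rw [if_neg hjn]
  have key := keyGen p n (Mdef n m mn) t (uN x) (FbN x) D (k + 1)
    (by omega) (by omega) hlt hmid hgt
  have hsplit : ∏ j ∈ Finset.range (n + 1), D j ^ p ^ Mdef n m mn j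
      = (∏ j ∈ Finset.range n,
          ((if j < k + 1 then t * xN x j + (1 - t) * xN x (k + 1) else xN x (j + 1)) -
            (if j + 1 < k + 1 then t * xN x (j + 1) + (1 - t) * xN x (k + 1)
              else xN x (j + 1 + 1))) ^ p ^ Mdef n m mn j) *
        (if n < k + 1 then t * xN x n + (1 - t) * xN x (k + 1)
          else xN x (n + 1)) ^ p ^ Mdef n m mn n := by
    rw [Finset.prod_range_succ]
    congr 1
    · refine Finset.prod_congr rfl fun j hj => ?_
      simp only [hD]
      rw [if_pos (Finset.mem_range.1 hj)]
    · simp only [hD]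
      rw [if_neg (lt_irrefl n)]
  rw [← hsplit, key]
  have hAs : AaN p n mn m (k + 1) = AaN p n mn m k + p ^ Mdef n m mn k := by
    have := AA_succ n (fun j => p ^ Mdef n m mn j) (k + 1) (by omega) (by omega)
    simpa [AaN] using this
  show t ^ AaN p n mn m k * (t ^ p ^ Mdef n m mn k * CcN p mn m x (k + 1) + CcN p mn m x k) = _
  rw [hAs, pow_add]
  ring

private lemma B_succ {X : Type*} [CommRing X] (p : ℕ) [Fact p.Prime] [CharP X p]
    {n : ℕ} (mn : ℕ) (m : Fin n → ℕ) (t : X) (x : Fin (n + 2) → X) (k : ℕ) (hk : k ≤ n) :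
    Bdef p mn m t x (k + 1)
      = (-1 : X) ^ k * ((1 - t ^ AaN p n mn m (k + 1)) * CcN p mn m x (k + 1) +
          (1 - t ^ AaN p n mn m k) * CcN p mn m x k) := by
  unfold Bdef
  rw [if_pos (show 1 ≤ k + 1 by omega), hy p mn m x k hk, hz p mn m t x k hk,
      pow_succ, pow_succ]
  ring

private lemma ftrans {X : Type*} [CommRing X] (p : ℕ) {n : ℕ} (mn : ℕ) (m : Fin n → ℕ)
    (w : Fin (n + 1) → X) (W : ℕ → X) (hw : ∀ j : Fin (n + 1), w j = W (j : ℕ)) :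
    (∏ i : Fin n, (w i.castSucc - w i.succ) ^ p ^ m i) * w (Fin.last n) ^ p ^ mn
      = (∏ j ∈ Finset.range n, (W j - W (j + 1)) ^ p ^ Mdef n m mn j) *
        W n ^ p ^ Mdef n m mn n := by
  have hMn : Mdef n m mn n = mn := dif_neg (lt_irrefl n)
  have h1 : ∀ i : Fin n, (w i.castSucc - w i.succ) ^ p ^ m i
      = (fun j : ℕ => (W j - W (j + 1)) ^ p ^ Mdef n m mn j) (i : ℕ) := by
    intro i
    have hM : Mdef n m mn (i : ℕ) = m i := by
      unfold Mdef
      rw [dif_pos i.isLt, Fin.eta]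
    simp only
    rw [hw i.castSucc, hw i.succ, Fin.coe_castSucc, Fin.val_succ, hM]
  rw [hMn, Finset.prod_congr rfl (fun i _ => h1 i),
      Fin.prod_univ_eq_prod_range (fun j => (W j - W (j + 1)) ^ p ^ Mdef n m mn j) n,
      hw (Fin.last n), Fin.val_last]

set_option maxHeartbeats 2000000 in
set_option synthInstance.maxHeartbeats 200000 in
/-- `f(x₁,…,xₙ) = (x₁-x₂)^{a₁} ⋯ (x_{n-1}-x_n)^{a_{n-1}} xₙ^{aₙ}`,
with `aᵢ = p^{mᵢ}` and `mₙ > 0`, is a quandle n-cocycle of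
`X = Z_p[t,t⁻¹]/(g(t))` provided `g(t)` divides `1 - t^a`, `a = a₁+⋯+aₙ`.
Here the paper's positive integer `n` is `n+1`. -/
theorem stmt1 (p : ℕ) (hp : p.Prime) (g : LaurentPolynomial (ZMod p))
    (n : ℕ) (m : Fin n → ℕ) (mn : ℕ) (hmn : 0 < mn)
    (hdvd : g ∣ (1 - T 1 ^ ((∑ i : Fin n, p ^ m i) + p ^ mn))) :
    let X := LaurentPolynomial (ZMod p) ⧸ Ideal.span {g}
    let t : X := Ideal.Quotient.mk (Ideal.span {g}) (T 1)
    let op : X → X → X := fun x y => t * x + (1 - t) * y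
    let f : (Fin (n + 1) → X) → X :=
      fun x => (∏ i : Fin n, (x i.castSucc - x i.succ) ^ (p ^ m i)) *
        (x (Fin.last n)) ^ (p ^ mn)
    -- δf = 0 :
    (∀ x : Fin (n + 2) → X,
      (∑ i : Fin (n + 2), if 1 ≤ (i : ℕ) then
        ((-1 : X) ^ ((i : ℕ) + 1)) *
          (f (fun j : Fin (n + 1) =>
              if (j : ℕ) < (i : ℕ) then x j.castSucc else x j.succ)
           - f (fun j : Fin (n + 1) =>
              if (j : ℕ) < (i : ℕ) then op (x j.castSucc) (x i) else x j.succ))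
        else 0) = 0)
    -- f vanishes on degenerate tuples :
    ∧ (∀ x : Fin (n + 1) → X, ∀ i j : Fin (n + 1),
        (j : ℕ) = (i : ℕ) + 1 → x i = x j → f x = 0) := by
  intro X t op f
  haveI : Fact p.Prime := ⟨hp⟩
  constructor
  · intro x
    rcases subsingleton_or_nontrivial X with hX | hX
    · exact Subsingleton.elim _ _
    haveI : CharP X p := by
      rw [CharP.charP_iff_prime_eq_zero hp]
      have h1 : ((p : ℕ) : LaurentPolynomial (ZMod p)) = 0 := by
        rw [← map_natCast (LaurentPolynomial.C (R := ZMod p)), ZMod.natCast_self, map_zero]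
      calc (p : X) = Ideal.Quotient.mk (Ideal.span {g}) ((p : ℕ) : LaurentPolynomial (ZMod p)) :=
            (map_natCast _ p).symm
        _ = 0 := by rw [h1, map_zero]
    have xN_coe : ∀ k : Fin (n + 2), xN x (k : ℕ) = x k := by
      intro k
      unfold xN
      rw [dif_pos k.isLt, Fin.eta]
    have body_eq : ∀ i : Fin (n + 2),
        (if 1 ≤ (i : ℕ) then
          ((-1 : X) ^ ((i : ℕ) + 1)) *
            (f (fun j : Fin (n + 1) =>
                if (j : ℕ) < (i : ℕ) then x j.castSucc else x j.succ)
             - f (fun j : Fin (n + 1) =>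
                if (j : ℕ) < (i : ℕ) then op (x j.castSucc) (x i) else x j.succ))
          else 0) = Bdef p mn m t x (i : ℕ) := by
      intro i
      have hf : ∀ w : Fin (n + 1) → X, f w
          = (∏ i' : Fin n, (w i'.castSucc - w i'.succ) ^ p ^ m i') *
            w (Fin.last n) ^ p ^ mn := fun w => rfl
      have hop : ∀ a b : X, op a b = t * a + (1 - t) * b := fun a b => rfl
      have hwy : ∀ j : Fin (n + 1),
          (if (j : ℕ) < (i : ℕ) then x j.castSucc else x j.succ)
            = if (j : ℕ) < (i : ℕ) then xN x (j : ℕ) else xN x ((j : ℕ) + 1) := by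
        intro j
        by_cases hj : (j : ℕ) < (i : ℕ)
        · rw [if_pos hj, if_pos hj, ← Fin.coe_castSucc j, xN_coe]
        · rw [if_neg hj, if_neg hj, ← Fin.val_succ j, xN_coe]
      have hfy : f (fun j : Fin (n + 1) =>
            if (j : ℕ) < (i : ℕ) then x j.castSucc else x j.succ)
          = (∏ j ∈ Finset.range n,
              ((if j < (i : ℕ) then xN x j else xN x (j + 1)) -
                (if j + 1 < (i : ℕ) then xN x (j + 1) else xN x (j + 1 + 1))) ^ p ^ Mdef n m mn j) *
            (if n < (i : ℕ) then xN x n else xN x (n + 1)) ^ p ^ Mdef n m mn n :=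
        (hf (fun j : Fin (n + 1) =>
            if (j : ℕ) < (i : ℕ) then x j.castSucc else x j.succ)).trans (ftrans p mn m
          (fun j : Fin (n + 1) => if (j : ℕ) < (i : ℕ) then x j.castSucc else x j.succ)
          (fun j => if j < (i : ℕ) then xN x j else xN x (j + 1)) hwy)
      have hwz : ∀ j : Fin (n + 1),
          (if (j : ℕ) < (i : ℕ) then op (x j.castSucc) (x i) else x j.succ)
            = if (j : ℕ) < (i : ℕ) then t * xN x (j : ℕ) + (1 - t) * xN x (i : ℕ)
              else xN x ((j : ℕ) + 1) := by
        intro j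
        by_cases hj : (j : ℕ) < (i : ℕ)
        · rw [if_pos hj, if_pos hj, hop]
          rw [← Fin.coe_castSucc j, xN_coe, xN_coe]
        · rw [if_neg hj, if_neg hj, ← Fin.val_succ j, xN_coe]
      have hfz : f (fun j : Fin (n + 1) =>
            if (j : ℕ) < (i : ℕ) then op (x j.castSucc) (x i) else x j.succ)
          = (∏ j ∈ Finset.range n,
              ((if j < (i : ℕ) then t * xN x j + (1 - t) * xN x (i : ℕ) else xN x (j + 1)) -
                (if j + 1 < (i : ℕ) then t * xN x (j + 1) + (1 - t) * xN x (i : ℕ)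
                  else xN x (j + 1 + 1))) ^ p ^ Mdef n m mn j) *
            (if n < (i : ℕ) then t * xN x n + (1 - t) * xN x (i : ℕ)
              else xN x (n + 1)) ^ p ^ Mdef n m mn n :=
        (hf (fun j : Fin (n + 1) =>
            if (j : ℕ) < (i : ℕ) then op (x j.castSucc) (x i) else x j.succ)).trans (ftrans p mn m
          (fun j : Fin (n + 1) => if (j : ℕ) < (i : ℕ) then op (x j.castSucc) (x i) else x j.succ)
          (fun j => if j < (i : ℕ) then t * xN x j + (1 - t) * xN x (i : ℕ)
            else xN x (j + 1)) hwz)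
      by_cases h : 1 ≤ (i : ℕ)
      · unfold Bdef
        rw [if_pos h, if_pos h, hfy, hfz]
      · unfold Bdef
        rw [if_neg h, if_neg h]
    have hN : AaN p n mn m (n + 1) = (∑ i : Fin n, p ^ m i) + p ^ mn := by
      unfold AaN
      rw [Finset.sum_congr rfl (fun j hj => if_pos (Finset.mem_range.1 hj)),
          Finset.sum_range_succ]
      congr 1
      · rw [← Fin.sum_univ_eq_sum_range (fun j => p ^ Mdef n m mn j) n]
        refine Finset.sum_congr rfl fun i _ => ?_
        congr 1
        unfold Mdef
        rw [dif_pos i.isLt, Fin.eta]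
      · congr 1
        exact dif_neg (lt_irrefl n)
    have ht : (1 : X) - t ^ ((∑ i : Fin n, p ^ m i) + p ^ mn) = 0 := by
      show (1 : X) - (Ideal.Quotient.mk (Ideal.span {g}) (T 1)) ^
        ((∑ i : Fin n, p ^ m i) + p ^ mn) = 0
      rw [← map_pow, ← map_one (Ideal.Quotient.mk (Ideal.span {g})), ← map_sub]
      exact Ideal.Quotient.eq_zero_iff_mem.2 (Ideal.mem_span_singleton.2 hdvd)
    calc (∑ i : Fin (n + 2), if 1 ≤ (i : ℕ) then
          ((-1 : X) ^ ((i : ℕ) + 1)) *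
            (f (fun j : Fin (n + 1) =>
                if (j : ℕ) < (i : ℕ) then x j.castSucc else x j.succ)
             - f (fun j : Fin (n + 1) =>
                if (j : ℕ) < (i : ℕ) then op (x j.castSucc) (x i) else x j.succ))
          else 0)
        = ∑ i : Fin (n + 2), Bdef p mn m t x (i : ℕ) :=
          Finset.sum_congr rfl fun i _ => body_eq i
      _ = ∑ k ∈ Finset.range (n + 2), Bdef p mn m t x k :=
          Fin.sum_univ_eq_sum_range _ _
      _ = (∑ k ∈ Finset.range (n + 1), Bdef p mn m t x (k + 1)) + Bdef p mn m t x 0 :=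
          Finset.sum_range_succ' _ _
      _ = ∑ k ∈ Finset.range (n + 1), (-1 : X) ^ k *
            ((1 - t ^ AaN p n mn m (k + 1)) * CcN p mn m x (k + 1) +
              (1 - t ^ AaN p n mn m k) * CcN p mn m x k) := by
          rw [show Bdef p mn m t x 0 = 0 from by simp [Bdef], add_zero]
          exact Finset.sum_congr rfl fun k hk =>
            B_succ p mn m t x k (by have := Finset.mem_range.1 hk; omega)
      _ = (1 - t ^ AaN p n mn m 0) * CcN p mn m x 0 -
            (-1 : X) ^ (n + 1) * ((1 - t ^ AaN p n mn m (n + 1)) * CcN p mn m x (n + 1)) :=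
          tele (fun k => (1 - t ^ AaN p n mn m k) * CcN p mn m x k) (n + 1)
      _ = 0 := by
          have h0 : AaN p n mn m 0 = 0 := by simp [AaN]
          rw [h0, pow_zero, sub_self, zero_mul, hN, ht, zero_mul, mul_zero, zero_sub, neg_zero]
  · intro x i j hji hxy
    have hi : (i : ℕ) < n := by
      have := j.isLt
      omega
    have e1 : (⟨(i : ℕ), hi⟩ : Fin n).castSucc = i := Fin.ext rfl
    have e2 : (⟨(i : ℕ), hi⟩ : Fin n).succ = j := Fin.ext (by simp [Fin.val_succ, hji])
    have hzero : (x (⟨(i : ℕ), hi⟩ : Fin n).castSucc - x (⟨(i : ℕ), hi⟩ : Fin n).succ)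
        ^ p ^ m ⟨(i : ℕ), hi⟩ = 0 := by
      rw [e1, e2, hxy, sub_self]
      exact zero_pow (pow_ne_zero _ hp.ne_zero)
    exact mul_eq_zero_of_left
      (Finset.prod_eq_zero (Finset.mem_univ (⟨(i : ℕ), hi⟩ : Fin n)) hzero) _
end

section
/- Let p be a prime, p either 2 or odd, and let a_1 = p^{m_1}, a_2 = p^{m_2} for nonnegative integers m_1, m_2. Let X = Z_p[t,t^{-1}]/(g(t)) be an Alexander quandle with operation x*y = tx + (1-t)y, and suppose g(t) divides 1 - t^{a_1+a_2}. Then the function φ(x,y) = (x-y)^{a_1} y^{a_2} satisfies the quandle 2-cocycle condition φ(x,y) + φ(x*y, z) = φ(x,z) + φ(x*z, y*z) for all x,y,z ∈ X, and φ(x,x) = 0 for all x ∈ X. -/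
set_option maxHeartbeats 1000000
set_option synthInstance.maxHeartbeats 400000


open LaurentPolynomial Finset

/-- if `g(t)` divides `1 - t^{a₁+a₂}` with `aᵢ = p^{mᵢ}`, then
`φ(x,y) = (x-y)^{a₁} y^{a₂}` is a quandle 2-cocycle of the Alexander quandle
`X = Z_p[t,t⁻¹]/(g(t))`. -/
theorem stmt2 (p : ℕ) (hp : p.Prime) (hp2 : p = 2 ∨ Odd p)
    (m1 m2 : ℕ) (g : LaurentPolynomial (ZMod p))
    (hdvd : g ∣ (1 - T 1 ^ (p ^ m1 + p ^ m2))) :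
    let X := LaurentPolynomial (ZMod p) ⧸ Ideal.span {g}
    let t : X := Ideal.Quotient.mk (Ideal.span {g}) (T 1)
    let op : X → X → X := fun x y => t * x + (1 - t) * y
    let φ : X → X → X := fun x y => (x - y) ^ (p ^ m1) * y ^ (p ^ m2)
    (∀ x y z : X, φ x y + φ (op x y) z = φ x z + φ (op x z) (op y z)) ∧
    (∀ x : X, φ x x = 0) := by
  intro X t op φ
  have hxx : ∀ x : X, φ x x = 0 := by
    intro x
    show (x - x) ^ (p ^ m1) * x ^ (p ^ m2) = 0
    have h1 : 1 ≤ p ^ m1 := Nat.one_le_pow _ _ hp.pos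
    rw [sub_self, zero_pow (by omega), zero_mul]
  rcases subsingleton_or_nontrivial X with h | h
  · exact ⟨fun x y z => Subsingleton.elim _ _, hxx⟩
  have hfact : Fact p.Prime := ⟨hp⟩
  have hchar : CharP X p := by
    rw [CharP.charP_iff_prime_eq_zero hp]
    have h1 : ((p : ℕ) : LaurentPolynomial (ZMod p)) = 0 := by
      rw [← map_natCast (algebraMap (ZMod p) (LaurentPolynomial (ZMod p))),
        ZMod.natCast_self, map_zero]
    calc (p : X) = Ideal.Quotient.mk (Ideal.span {g}) ((p : ℕ) : LaurentPolynomial (ZMod p)) :=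
          (map_natCast _ p).symm
      _ = 0 := by rw [h1, map_zero]
  have ht : t ^ (p ^ m1 + p ^ m2) = 1 := by
    have h0 : (Ideal.Quotient.mk (Ideal.span {g})) (1 - T 1 ^ (p ^ m1 + p ^ m2)) = 0 := by
      rw [Ideal.Quotient.eq_zero_iff_mem, Ideal.mem_span_singleton]
      exact hdvd
    rw [map_sub, map_one, map_pow, sub_eq_zero] at h0
    exact h0.symm
  refine ⟨fun x y z => ?_, hxx⟩
  show (x - y) ^ (p ^ m1) * y ^ (p ^ m2) +
      (t * x + (1 - t) * y - z) ^ (p ^ m1) * z ^ (p ^ m2) =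
      (x - z) ^ (p ^ m1) * z ^ (p ^ m2) +
      (t * x + (1 - t) * z - (t * y + (1 - t) * z)) ^ (p ^ m1) *
        (t * y + (1 - t) * z) ^ (p ^ m2)
  have e1 : (x - y) ^ (p ^ m1) = (x - z) ^ (p ^ m1) - (y - z) ^ (p ^ m1) := by
    rw [show x - y = (x - z) - (y - z) by ring, sub_pow_char_pow]
  have e1t : (1 - t) ^ (p ^ m1) = 1 - t ^ (p ^ m1) := by
    rw [sub_pow_char_pow, one_pow]
  have e2t : (1 - t) ^ (p ^ m2) = 1 - t ^ (p ^ m2) := by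
    rw [sub_pow_char_pow, one_pow]
  have e2 : (t * x + (1 - t) * y - z) ^ (p ^ m1) =
      t ^ (p ^ m1) * (x - z) ^ (p ^ m1) + (1 - t ^ (p ^ m1)) * (y - z) ^ (p ^ m1) := by
    rw [show t * x + (1 - t) * y - z = t * (x - z) + (1 - t) * (y - z) by ring,
      add_pow_char_pow, mul_pow, mul_pow, e1t]
  have e3 : (t * x + (1 - t) * z - (t * y + (1 - t) * z)) ^ (p ^ m1) =
      t ^ (p ^ m1) * ((x - z) ^ (p ^ m1) - (y - z) ^ (p ^ m1)) := by
    rw [show t * x + (1 - t) * z - (t * y + (1 - t) * z) = t * (x - y) by ring,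
      mul_pow, e1]
  have e4 : (t * y + (1 - t) * z) ^ (p ^ m2) =
      t ^ (p ^ m2) * y ^ (p ^ m2) + (1 - t ^ (p ^ m2)) * z ^ (p ^ m2) := by
    rw [add_pow_char_pow, mul_pow, mul_pow, e2t]
  rw [e1, e2, e3, e4]
  have ht' : t ^ (p ^ m1) * t ^ (p ^ m2) = 1 := by
    rw [← pow_add]; exact ht
  linear_combination (((y - z) ^ (p ^ m1) - (x - z) ^ (p ^ m1)) *
    (y ^ (p ^ m2) - z ^ (p ^ m2))) * ht'
end

section
/- Let p be an odd prime, n a positive integer, and m = (p^n + 1)/2, with X = Z_p[t,t^{-1}]/(ξ_m(t)) where ξ_m(t) = Σ_{i=0}^{m-1}(-t)^i. Then t·ξ_m'(t) is invertible in X, where ξ_m' is the formal derivative of ξ_m. -/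
open LaurentPolynomial Finset Polynomial

/-!
Differentiating `(1 + X) ξ_m = 1 - (-X)^m` and multiplying by `X` gives
`X (1 + X) ξ_m' = -m + m (1 + X) ξ_m`, so `X ξ_m'` is invertible modulo `ξ_m` as soon as `m` is;
and `2 m = pⁿ + 1` makes `m` invertible mod `p`.
-/

theorem X_mul_one_add_X_mul_derivative_sum_neg_X_pow {R : Type*} [CommRing R] (m : ℕ) :
    X * (1 + X) * derivative (∑ i ∈ range m, (-X : R[X]) ^ i) + (m : R[X]) =
      ((m : R[X]) * (1 + X) - X) * ∑ i ∈ range m, (-X : R[X]) ^ i := by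
  cases m with
  | zero => simp
  | succ k =>
    set ξ := ∑ i ∈ range (k + 1), (-X : R[X]) ^ i
    have hξ : (1 + X) * ξ = 1 - (-X) ^ (k + 1) := by
      simpa only [sub_neg_eq_add] using mul_neg_geom_sum (-X : R[X]) (k + 1)
    have hξ' := congrArg derivative hξ
    simp only [derivative_mul, derivative_add, derivative_one, derivative_X, derivative_sub,
      derivative_pow, derivative_neg, zero_add, one_mul, mul_one, mul_neg, neg_neg, zero_sub,
      C_eq_natCast, Nat.add_one_sub_one] at hξ'
    rw [pow_succ] at hξ
    linear_combination X * hξ' - ((k + 1 : ℕ) : R[X]) * hξ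

theorem isUnit_X_mul_derivative_sum_neg_X_pow {R S : Type*} [CommRing R] [CommRing S]
    (m : ℕ) (hm : IsUnit (m : R)) (f : R[X] →+* S)
    (hf : f (∑ i ∈ range m, (-X : R[X]) ^ i) = 0) :
    IsUnit (f (X * derivative (∑ i ∈ range m, (-X : R[X]) ^ i))) := by
  have hfX := congrArg f (X_mul_one_add_X_mul_derivative_sum_neg_X_pow (R := R) m)
  rw [map_mul, hf, mul_zero, map_add, mul_right_comm, map_mul] at hfX
  have hmS : IsUnit (f (m : R[X])) := by simpa using hm.map (f.comp C)
  refine isUnit_of_mul_isUnit_left (y := -f (1 + X)) ?_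
  rwa [mul_neg, eq_neg_of_add_eq_zero_left hfX, neg_neg]

theorem isUnit_natCast_pow_add_one_div_two {p : ℕ} (hp : Odd p) (n : ℕ) :
    IsUnit (((p ^ n + 1) / 2 : ℕ) : ZMod p) := by
  rcases n.eq_zero_or_pos with rfl | hn
  · simp
  · obtain ⟨k, hk⟩ := hp.pow (n := n)
    refine IsUnit.of_mul_eq_one 2 ?_
    have h : ((p ^ n + 1) / 2 : ℕ) * 2 = p ^ n + 1 := by omega
    exact_mod_cast (congrArg (Nat.cast : ℕ → ZMod p) h).trans (by simp [zero_pow hn.ne'])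

theorem stmt10_general (p : ℕ) (hodd : Odd p) (n : ℕ) :
    let m := (p ^ n + 1) / 2
    let ξm : Polynomial (ZMod p) := ∑ i ∈ Finset.range m, (-X) ^ i
    IsUnit (Ideal.Quotient.mk (Ideal.span {ξm.toLaurent})
      (T 1 * (Polynomial.derivative ξm).toLaurent)) := by
  intro m ξm
  have hξm : (Ideal.Quotient.mk (Ideal.span {ξm.toLaurent})).comp toLaurent ξm = 0 :=
    Ideal.Quotient.eq_zero_iff_mem.mpr (Ideal.subset_span rfl)
  rw [← Polynomial.toLaurent_X, ← map_mul]
  exact isUnit_X_mul_derivative_sum_neg_X_pow m (isUnit_natCast_pow_add_one_div_two hodd n) _ hξm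

/-- for an odd prime `p`, `n ≥ 1` and `m = (pⁿ+1)/2`, the element
`t·ξ_m'(t)` is invertible in `X = Z_p[t,t⁻¹]/(ξ_m(t))`, where
`ξ_m(t) = ∑_{i<m}(-t)^i` and `ξ_m'` is its formal derivative. -/
theorem stmt10 (p : ℕ) (hp : p.Prime) (hodd : Odd p) (n : ℕ) (hn : 0 < n) :
    let m := (p ^ n + 1) / 2
    let ξm : Polynomial (ZMod p) := ∑ i ∈ Finset.range m, (-X) ^ i
    IsUnit (Ideal.Quotient.mk (Ideal.span {ξm.toLaurent})
      (T 1 * (Polynomial.derivative ξm).toLaurent)) :=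
  stmt10_general p hodd n
end

section
/- Let p = 2, n ≥ 1, m = 2^n + 1, and X = Z_2[t,t^{-1}]/(ξ_m(t)) with ξ_m = 1 + t + ··· + t^{m-1}. Set a_1 = a_2 = 2^{n-1} and a_3 = 1. Then in X: Σ_{k=0}^{m-1} t^{k·a_2} · ξ_k^{a_1 + a_3} = m · (1 + t^{a_1})^{-1} (1 + t^{a_3})^{-1} = (1+t)^{-a_1}(1+t)^{-1}, a nonzero element of X, where ξ_k = Σ_{i=0}^{k-1} t^i. -/
open LaurentPolynomial Finset

/-!
Write `a = 2^(n-1)`, so `m = 2a + 1`. In characteristic 2, `(1 + t) ξ_k = 1 + t^k` and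
`(1 + t^k)^a = 1 + t^(ka)`, so multiplying the `k`-th summand of `S` by `(1 + t)^(a+1)` gives
`t^(ka) + t^(2ka) + t^((a+1)k) + t^(mk)`. As `ξ_m(t) = 0` forces `t^m = 1`, and `a`, `2a`,
`a + 1` are prime to `m`, the first three sums are permutations of `ξ_m(t) = 0`, while the last
one is `m = 1`. Hence `(1 + t)^(a+1) S = 1`. Finally `X ≠ 0`: sending `t` to a primitive `m`-th
root of unity in an algebraic closure of `𝔽₂` gives a ring map from `X` to a field.
-/

theorem pow_eq_one_of_geom_sum_eq_zero {R : Type*} [Ring R] {t : R} {m : ℕ}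
    (h : ∑ i ∈ range m, t ^ i = 0) : t ^ m = 1 := by
  have := geom_sum_mul t m
  rwa [h, zero_mul, eq_comm, sub_eq_zero] at this

theorem sum_range_pow_mul_eq_zero_of_coprime {R : Type*} [Ring R] {t : R} {m a : ℕ}
    (hm : 1 < m) (h : ∑ i ∈ range m, t ^ i = 0) (ha : a.Coprime m) :
    ∑ k ∈ range m, t ^ (k * a) = 0 := by
  obtain ⟨b, -, hb⟩ := Nat.exists_mul_mod_eq_one_of_coprime ha hm
  have hinv {c d : ℕ} (hcd : c * d % m = 1) (k : ℕ) (hk : k ∈ range m) :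
      k * c % m * d % m = k := by
    rw [Nat.mod_mul_mod, mul_assoc, Nat.mul_mod, hcd, mul_one, Nat.mod_mod,
      Nat.mod_eq_of_lt (mem_range.1 hk)]
  have hmod (c k : ℕ) : k * c % m ∈ range m := mem_range.2 (Nat.mod_lt _ (by omega))
  rw [← h]
  exact sum_nbij' (· * a % m) (· * b % m) (fun k _ => hmod a k) (fun k _ => hmod b k)
    (hinv hb) (hinv (by rwa [mul_comm]))
    fun k _ => pow_eq_pow_mod _ (pow_eq_one_of_geom_sum_eq_zero h)

theorem eq_ringInverse_of_mul_eq_one {M₀ : Type*} [CommMonoidWithZero M₀] {a b : M₀}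
    (h : a * b = 1) : b = Ring.inverse a := by
  rw [← Ring.inverse_mul_cancel_left a b (.of_mul_eq_one b h), h, mul_one]

section CharTwo

variable {R : Type*} [CommRing R] [CharP R 2]

theorem one_add_mul_geom_sum (t : R) (k : ℕ) :
    (1 + t) * ∑ i ∈ range k, t ^ i = 1 + t ^ k := by
  have := geom_sum_mul t k
  rw [CharTwo.sub_eq_add, CharTwo.sub_eq_add] at this
  rw [mul_comm, add_comm 1 t, this, add_comm]

theorem one_add_pow_two_pow (t : R) (j : ℕ) : (1 + t) ^ 2 ^ j = 1 + t ^ 2 ^ j := by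
  rw [add_pow_char_pow, one_pow]

theorem one_add_pow_mul_geom_sum_pow (t : R) (j k : ℕ) :
    (1 + t) ^ (2 ^ j + 1) * (t ^ (k * 2 ^ j) * (∑ i ∈ range k, t ^ i) ^ (2 ^ j + 1)) =
      t ^ (k * 2 ^ j) + t ^ (k * 2 ^ (j + 1)) + t ^ (k * (2 ^ j + 1)) +
        t ^ (k * (2 ^ (j + 1) + 1)) := by
  calc _ = t ^ (k * 2 ^ j) * ((1 + t) * ∑ i ∈ range k, t ^ i) ^ 2 ^ j *
        ((1 + t) * ∑ i ∈ range k, t ^ i) := by rw [mul_pow]; ring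
    _ = t ^ (k * 2 ^ j) * (1 + t ^ (k * 2 ^ j)) * (1 + t ^ k) := by
        rw [one_add_mul_geom_sum, one_add_pow_two_pow, ← pow_mul]
    _ = _ := by ring

theorem one_add_pow_mul_sum_geom_sum_pow_eq_one {t : R} (j : ℕ)
    (h : ∑ i ∈ range (2 ^ (j + 1) + 1), t ^ i = 0) :
    (1 + t) ^ (2 ^ j + 1) * ∑ k ∈ range (2 ^ (j + 1) + 1),
      t ^ (k * 2 ^ j) * (∑ i ∈ range k, t ^ i) ^ (2 ^ j + 1) = 1 := by
  have hm : 1 < 2 ^ (j + 1) + 1 := by simp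
  have hcop_two_pow (i : ℕ) : Nat.Coprime (2 ^ i) (2 ^ (j + 1) + 1) := by
    apply Nat.Coprime.pow_left; simp [pow_succ]
  have hcop_succ : Nat.Coprime (2 ^ j + 1) (2 ^ (j + 1) + 1) := by
    rw [pow_succ, mul_two, add_assoc, Nat.coprime_add_self_right]; simp
  have hsum_last : ∑ k ∈ range (2 ^ (j + 1) + 1), t ^ (k * (2 ^ (j + 1) + 1)) = 1 := by
    simp_rw [mul_comm _ (2 ^ (j + 1) + 1), pow_mul, pow_eq_one_of_geom_sum_eq_zero h, one_pow,
      sum_const, card_range, nsmul_one]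
    simp [pow_succ, CharTwo.two_eq_zero]
  simp only [mul_sum, one_add_pow_mul_geom_sum_pow, sum_add_distrib, hsum_last,
    sum_range_pow_mul_eq_zero_of_coprime hm h (hcop_two_pow _),
    sum_range_pow_mul_eq_zero_of_coprime hm h hcop_succ, zero_add]

end CharTwo

theorem nontrivial_quotient_span_geom_sum {F : Type*} [Field F] {m : ℕ} (hm : 1 < m)
    (hmF : (m : F) ≠ 0) :
    Nontrivial (F[T;T⁻¹] ⧸ Ideal.span {∑ i ∈ range m, (T 1 : F[T;T⁻¹]) ^ i}) := by
  have : NeZero (m : F) := ⟨hmF⟩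
  obtain ⟨ζ, hζ⟩ := HasEnoughRootsOfUnity.exists_primitiveRoot (AlgebraicClosure F) m
  let φ := eval₂ (algebraMap F (AlgebraicClosure F)) (hζ.isUnit (by omega)).unit
  refine Ideal.Quotient.nontrivial_iff.2 (ne_top_of_le_ne_top (RingHom.ker_ne_top φ) ?_)
  rw [Ideal.span_le, Set.singleton_subset_iff, SetLike.mem_coe, RingHom.mem_ker, map_sum]
  simpa [φ, ← T_pow, eval₂_T_n] using hζ.geom_sum_eq_zero hm

/-- in `X = Z_2[t,t⁻¹]/(ξ_m(t))` with `m = 2ⁿ+1`,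
`a₁ = a₂ = 2^{n-1}`, `a₃ = 1`, one has
`∑_{k=0}^{m-1} t^{k a₂} ξ_k^{a₁+a₃} = m·(1+t^{a₁})⁻¹(1+t^{a₃})⁻¹
 = (1+t)^{-a₁}(1+t)^{-1}`, a nonzero element of `X`. -/
theorem stmt14 (n : ℕ) (hn : 0 < n) :
    let m := 2 ^ n + 1
    let a1 := 2 ^ (n - 1)
    let a2 := 2 ^ (n - 1)
    let a3 := 1
    let ξm : LaurentPolynomial (ZMod 2) := ∑ i ∈ Finset.range m, T 1 ^ i
    let t : LaurentPolynomial (ZMod 2) ⧸ Ideal.span {ξm} :=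
      Ideal.Quotient.mk (Ideal.span {ξm}) (T 1)
    let ξ : ℕ → LaurentPolynomial (ZMod 2) ⧸ Ideal.span {ξm} :=
      fun k => ∑ i ∈ Finset.range k, t ^ i
    let S := ∑ k ∈ Finset.range m, t ^ (k * a2) * (ξ k) ^ (a1 + a3)
    S = (m : LaurentPolynomial (ZMod 2) ⧸ Ideal.span {ξm}) *
          Ring.inverse (1 + t ^ a1) * Ring.inverse (1 + t ^ a3) ∧
    S = Ring.inverse ((1 + t) ^ a1) * Ring.inverse (1 + t) ∧
    S ≠ 0 := by
  intro m a1 a2 a3 ξm t ξ S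
  obtain ⟨j, rfl⟩ : ∃ j, n = j + 1 := ⟨n - 1, by omega⟩
  have hm_two : ((m : ℕ) : ZMod 2) = 1 := by simp [m, pow_succ, CharTwo.two_eq_zero]
  have := nontrivial_quotient_span_geom_sum (F := ZMod 2) (m := m) (by simp [m]) (by simp [hm_two])
  have := charP_of_injective_algebraMap
    (algebraMap (ZMod 2) (LaurentPolynomial (ZMod 2) ⧸ Ideal.span {ξm})).injective 2
  have hξm : ∑ i ∈ range m, t ^ i = 0 := by
    simp only [t, ← map_pow, ← map_sum]
    exact Ideal.Quotient.eq_zero_iff_mem.2 (Ideal.mem_span_singleton_self ξm)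
  have hS : (1 + t) ^ (a1 + 1) * S = 1 := one_add_pow_mul_sum_geom_sum_pow_eq_one j hξm
  have hunit : IsUnit (1 + t) := isUnit_pow_succ_iff.1 (.of_mul_eq_one _ hS)
  have hS_inv : S = Ring.inverse ((1 + t) ^ a1) * Ring.inverse (1 + t) := by
    rw [← Ring.inverse_mul (.inl hunit), ← pow_succ']
    exact eq_ringInverse_of_mul_eq_one hS
  refine ⟨?_, hS_inv, right_ne_zero_of_mul_eq_one hS⟩
  have hfrob : (1 + t) ^ a1 = 1 + t ^ a1 := one_add_pow_two_pow t j
  rw [← map_natCast (algebraMap (ZMod 2) _), hm_two, map_one, one_mul, pow_one, ← hfrob]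
  exact hS_inv
end

section
/- Let p be a prime, m a positive integer, and X = Z_p[t,t^{-1}]/(ξ_m(t)) with ξ_m(t) = Σ_{i=0}^{m-1}(-t)^i. Let a_1, a_2 be powers of p with ξ_m(t) dividing 1 - t^{a_1+a_2}. For any a, b ∈ X, the 2-string braid coloring of the (2,m)-torus knot starting from top colors (a,b) (with k-th pair (tξ_{k-1}a + ξ_k b, tξ_k a + ξ_{k+1} b)) has total weight Σ_{k=1}^{m} f(tξ_{k-1}a + ξ_k b, tξ_k a + ξ_{k+1} b) = (a-b)^{a_1+a_2} · (t^2 ξ_m'(t))^{a_2} in X, where f(x_1,x_2) = (x_1-x_2)^{a_1} x_2^{a_2} and ξ_m' is the formal derivative. -/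
/-!
Put `a₁ = p ^ n₁`, `a₂ = p ^ n₂`. Since `ξ_{k+2} = 1 - t ξ_{k+1}`, the `k`-th colour pair is
`(x₂ + (-t)^{k+1}(a - b), x₂)` with `x₂ = t ξ_{k+1}(a - b) + b`, so by Frobenius its weight is
`(-t)^{(k+1)a₁} (a-b)^{a₁} ((t ξ_{k+1})^{a₂} (a-b)^{a₂} + b^{a₂})`. The `b^{a₂}` parts add up to
`((-t) ξ_m)^{a₁} = 0`. In the rest, `(-t)^m = 1` and `(-t)^{a₁+a₂} = 1` turn `(-t)^{(k+1)a₁}` into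
`(-t)^{(m-k-1)a₂}`, so Frobenius collects the sum into `(t Σ_k (-t)^{m-k-1} ξ_{k+1})^{a₂}`, and
`Σ_k (-t)^{m-k-1} ξ_{k+1} = Σ_i (i+1)(-t)^i = t ξ_m' + ξ_m = t ξ_m'`.
-/

open LaurentPolynomial Finset Polynomial

theorem pow_mul_eq_pow_sub_mul {M : Type*} [CommMonoid M] {x : M} {m a b j : ℕ}
    (hm : x ^ m = 1) (hab : x ^ (a + b) = 1) (hj : j ≤ m) :
    x ^ (j * a) = x ^ ((m - j) * b) := by
  have hexp : j * a + m * b = (a + b) * j + (m - j) * b := by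
    obtain ⟨i, rfl⟩ := Nat.exists_eq_add_of_le hj
    rw [Nat.add_sub_cancel_left]
    ring
  calc x ^ (j * a) = x ^ (j * a) * (x ^ m) ^ b := by rw [hm, one_pow, mul_one]
    _ = x ^ ((m - j) * b) := by
      rw [← pow_mul, ← pow_add, hexp, pow_add, pow_mul, hab, one_pow, one_mul]

theorem sum_range_pow_mul_geom_sum_succ {R : Type*} [CommRing R] (x : R) (n : ℕ) :
    ∑ k ∈ range n, x ^ (n - (k + 1)) * ∑ i ∈ range (k + 1), x ^ i =
      ∑ i ∈ range n, ((i : R) + 1) * x ^ i := by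
  induction n with
  | zero => simp
  | succ n ih =>
    have hlhs : ∀ k ∈ range n, x ^ (n + 1 - (k + 1)) * ∑ i ∈ range (k + 1), x ^ i =
        x * (x ^ (n - (k + 1)) * ∑ i ∈ range (k + 1), x ^ i) := fun k hk => by
      rw [← mul_assoc, ← pow_succ', Nat.sub_add_comm (mem_range.mp hk)]
    have hrhs : ∑ i ∈ range (n + 1), ((i : R) + 1) * x ^ i =
        x * ∑ i ∈ range n, ((i : R) + 1) * x ^ i + ∑ i ∈ range (n + 1), x ^ i := by
      rw [sum_range_succ', sum_range_succ' (x ^ ·), mul_sum, ← add_assoc, ← sum_add_distrib]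
      push_cast
      congr 1
      · exact sum_congr rfl fun i _ => by ring
      · simp
    rw [sum_range_succ, sum_congr rfl hlhs, ← mul_sum, ih, hrhs, Nat.sub_self, pow_zero, one_mul]

section ExpChar

variable {R : Type*} [CommRing R] {p : ℕ} [ExpChar R p]

theorem sum_pow_succ_mul_char_pow_eq_zero {x : R} {m : ℕ} (hx : ∑ i ∈ range m, x ^ i = 0)
    (n : ℕ) : ∑ k ∈ range m, x ^ ((k + 1) * p ^ n) = 0 := by
  simp_rw [pow_mul]
  rw [← sum_pow_char_pow, sum_congr rfl fun k _ => pow_succ' x k, ← mul_sum, hx, mul_zero,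
    zero_pow (expChar_pow_pos R p n).ne']

theorem neg_pow_char_pow_add_char_pow (x : R) (n₁ n₂ : ℕ) :
    (-x) ^ (p ^ n₁ + p ^ n₂) = x ^ (p ^ n₁ + p ^ n₂) := by
  rw [neg_pow, pow_add, neg_one_pow_expChar_pow, neg_one_pow_expChar_pow, neg_mul_neg,
    one_mul, one_mul]

theorem sum_pow_mul_geom_sum_char_pow {x : R} {m : ℕ} (hx : ∑ i ∈ range m, x ^ i = 0)
    {n₁ n₂ : ℕ} (hxn : x ^ (p ^ n₁ + p ^ n₂) = 1) (c : R) :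
    ∑ k ∈ range m, x ^ ((k + 1) * p ^ n₁) * (c * ∑ i ∈ range (k + 1), x ^ i) ^ p ^ n₂ =
      (c * ∑ i ∈ range m, (i : R) * x ^ i) ^ p ^ n₂ := by
  have hxm : x ^ m = 1 := by
    rw [← sub_eq_zero, ← geom_sum_mul, hx, zero_mul]
  have hterm : ∀ k ∈ range m,
      x ^ ((k + 1) * p ^ n₁) * (c * ∑ i ∈ range (k + 1), x ^ i) ^ p ^ n₂ =
        (c * (x ^ (m - (k + 1)) * ∑ i ∈ range (k + 1), x ^ i)) ^ p ^ n₂ := fun k hk => by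
    rw [pow_mul_eq_pow_sub_mul hxm hxn (mem_range.mp hk), pow_mul, ← mul_pow, mul_left_comm]
  rw [sum_congr rfl hterm, ← sum_pow_char_pow, ← mul_sum, sum_range_pow_mul_geom_sum_succ]
  simp_rw [add_one_mul (α := R), sum_add_distrib, hx, add_zero]

theorem coloring_weight_term (t a b : R) (a₁ n₂ k : ℕ) :
    let ξ : ℕ → R := fun k => ∑ i ∈ range k, (-t) ^ i
    ((t * ξ k * a + ξ (k + 1) * b) - (t * ξ (k + 1) * a + ξ (k + 2) * b)) ^ a₁ *
        (t * ξ (k + 1) * a + ξ (k + 2) * b) ^ p ^ n₂ =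
      (-t) ^ ((k + 1) * a₁) * (a - b) ^ a₁ *
        ((t * ξ (k + 1)) ^ p ^ n₂ * (a - b) ^ p ^ n₂ + b ^ p ^ n₂) := by
  intro ξ
  have hdiff : (t * ξ k * a + ξ (k + 1) * b) - (t * ξ (k + 1) * a + ξ (k + 2) * b) =
      (-t) ^ (k + 1) * (a - b) := by
    simp only [ξ, sum_range_succ]
    ring
  have hsecond : t * ξ (k + 1) * a + ξ (k + 2) * b = t * ξ (k + 1) * (a - b) + b := by
    simp only [ξ, geom_sum_succ (x := -t) (n := k + 1)]
    ring
  rw [hdiff, hsecond, add_pow_expChar_pow, mul_pow, ← pow_mul, mul_pow (t * ξ (k + 1))]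

theorem sum_coloring_weight {t : R} {m : ℕ} (hξ : ∑ i ∈ range m, (-t) ^ i = 0) {n₁ n₂ : ℕ}
    (ht : t ^ (p ^ n₁ + p ^ n₂) = 1) (a b : R) :
    let ξ : ℕ → R := fun k => ∑ i ∈ range k, (-t) ^ i
    ∑ k ∈ range m,
        ((t * ξ k * a + ξ (k + 1) * b) - (t * ξ (k + 1) * a + ξ (k + 2) * b)) ^ p ^ n₁ *
          (t * ξ (k + 1) * a + ξ (k + 2) * b) ^ p ^ n₂ =
      (a - b) ^ (p ^ n₁ + p ^ n₂) * (t * ∑ i ∈ range m, (i : R) * (-t) ^ i) ^ p ^ n₂ := by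
  intro ξ
  have hsplit : ∑ k ∈ range m, (-t) ^ ((k + 1) * p ^ n₁) * (a - b) ^ p ^ n₁ *
        ((t * ξ (k + 1)) ^ p ^ n₂ * (a - b) ^ p ^ n₂ + b ^ p ^ n₂) =
      (a - b) ^ (p ^ n₁ + p ^ n₂) *
          ∑ k ∈ range m, (-t) ^ ((k + 1) * p ^ n₁) * (t * ξ (k + 1)) ^ p ^ n₂ +
        (a - b) ^ p ^ n₁ * b ^ p ^ n₂ * ∑ k ∈ range m, (-t) ^ ((k + 1) * p ^ n₁) := by
    rw [mul_sum, mul_sum, ← sum_add_distrib]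
    exact sum_congr rfl fun k _ => by ring
  have hnt : (-t) ^ (p ^ n₁ + p ^ n₂) = 1 := by rwa [neg_pow_char_pow_add_char_pow]
  rw [sum_congr rfl fun k _ => coloring_weight_term t a b _ n₂ k, hsplit,
    sum_pow_succ_mul_char_pow_eq_zero hξ, sum_pow_mul_geom_sum_char_pow hξ hnt, mul_zero, add_zero]

end ExpChar

theorem X_mul_derivative_sum_neg_X_pow {S : Type*} [CommRing S] (m : ℕ) :
    (X : S[X]) * derivative (∑ i ∈ range m, (-X) ^ i) = ∑ i ∈ range m, (i : S[X]) * (-X) ^ i := by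
  rw [derivative_sum, mul_sum]
  refine sum_congr rfl fun i _ => ?_
  rcases i with _ | i
  · simp
  · rw [derivative_pow, derivative_neg, derivative_X, Nat.add_sub_cancel, pow_succ,
      map_natCast]
    push_cast
    ring

theorem stmt15_general (p m m1 m2 : ℕ) (hp : p.Prime)
    (hdvd : (∑ i ∈ Finset.range m, (-X : Polynomial (ZMod p)) ^ i).toLaurent ∣
      (1 - T 1 ^ (p ^ m1 + p ^ m2))) :
    let ξpoly : Polynomial (ZMod p) := ∑ i ∈ Finset.range m, (-X) ^ i
    let a1 := p ^ m1
    let a2 := p ^ m2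
    let Q := LaurentPolynomial (ZMod p) ⧸ Ideal.span {ξpoly.toLaurent}
    let t : Q := Ideal.Quotient.mk (Ideal.span {ξpoly.toLaurent}) (T 1)
    let ξ : ℕ → Q := fun k => ∑ i ∈ Finset.range k, (-t) ^ i
    let ξ' : Q := Ideal.Quotient.mk (Ideal.span {ξpoly.toLaurent})
      ((Polynomial.derivative ξpoly).toLaurent)
    let f : Q → Q → Q := fun x1 x2 => (x1 - x2) ^ a1 * x2 ^ a2
    ∀ a b : Q,
      ∑ k ∈ Finset.range m,
          f (t * ξ k * a + ξ (k + 1) * b) (t * ξ (k + 1) * a + ξ (k + 2) * b) =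
        (a - b) ^ (a1 + a2) * (t ^ 2 * ξ') ^ a2 := by
  intro ξpoly a1 a2 Q t ξ ξ' f a b
  rcases subsingleton_or_nontrivial Q with hQ | hQ
  · exact Subsingleton.elim _ _
  have : Fact p.Prime := ⟨hp⟩
  have : CharP Q p := charP_of_injective_algebraMap (algebraMap (ZMod p) Q).injective p
  let φ : (ZMod p)[X] →+* Q := (Ideal.Quotient.mk _).comp Polynomial.toLaurent
  have ht : φ X = t := congrArg (Ideal.Quotient.mk _) Polynomial.toLaurent_X
  have hξ : ∑ i ∈ range m, (-t) ^ i = 0 := by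
    have : φ ξpoly = 0 := (Ideal.Quotient.eq_zero_iff_dvd _ _).mpr dvd_rfl
    simpa only [ξpoly, map_sum, map_pow, map_neg, ht] using this
  have hta : t ^ (p ^ m1 + p ^ m2) = 1 := by
    have := (Ideal.Quotient.eq_zero_iff_dvd _ _).mpr hdvd
    rwa [map_sub, map_one, map_pow, sub_eq_zero, eq_comm] at this
  have htξ' : t * ξ' = ∑ i ∈ range m, (i : Q) * (-t) ^ i := by
    have hξ' : φ (derivative ξpoly) = ξ' := rfl
    have := congrArg φ (X_mul_derivative_sum_neg_X_pow (S := ZMod p) m)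
    rw [map_mul, ht, hξ'] at this
    simpa only [map_sum, map_mul, map_natCast, map_pow, map_neg, ht] using this
  rw [sq, mul_assoc, htξ']
  exact sum_coloring_weight hξ hta a b

/-- for `X = Z_p[t,t⁻¹]/(ξ_m(t))`, powers `a₁ = p^{m₁}`,
`a₂ = p^{m₂}` with `ξ_m ∣ 1 - t^{a₁+a₂}`, the total weight of the
`(2,m)`-torus-knot coloring with top colors `(a,b)` under
`f(x₁,x₂) = (x₁-x₂)^{a₁} x₂^{a₂}` equals `(a-b)^{a₁+a₂}·(t²ξ_m'(t))^{a₂}`.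
(The `k`-th color pair, `k = 1,…,m`, is `(tξ_{k-1}a + ξ_k b, tξ_k a + ξ_{k+1} b)`.) -/
theorem stmt15 (p m m1 m2 : ℕ) (hp : p.Prime) (hm : 0 < m)
    (hdvd : (∑ i ∈ Finset.range m, (-X : Polynomial (ZMod p)) ^ i).toLaurent ∣
      (1 - T 1 ^ (p ^ m1 + p ^ m2))) :
    let ξpoly : Polynomial (ZMod p) := ∑ i ∈ Finset.range m, (-X) ^ i
    let a1 := p ^ m1
    let a2 := p ^ m2
    let Q := LaurentPolynomial (ZMod p) ⧸ Ideal.span {ξpoly.toLaurent}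
    let t : Q := Ideal.Quotient.mk (Ideal.span {ξpoly.toLaurent}) (T 1)
    let ξ : ℕ → Q := fun k => ∑ i ∈ Finset.range k, (-t) ^ i
    let ξ' : Q := Ideal.Quotient.mk (Ideal.span {ξpoly.toLaurent})
      ((Polynomial.derivative ξpoly).toLaurent)
    let f : Q → Q → Q := fun x1 x2 => (x1 - x2) ^ a1 * x2 ^ a2
    ∀ a b : Q,
      ∑ k ∈ Finset.range m,
          f (t * ξ k * a + ξ (k + 1) * b) (t * ξ (k + 1) * a + ξ (k + 2) * b) =
        (a - b) ^ (a1 + a2) * (t ^ 2 * ξ') ^ a2 :=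
  stmt15_general p m m1 m2 hp hdvd
end

section
/- Let X be a quandle and a ∈ X an element such that the m-fold right multiplication (*_a)^m is the identity map on X for some positive integer m. Define h'_a : C_n^Q(X) → C_{n+1}^Q(X) on generators by h'_a(c) = Σ_{j=0}^{m-1} (*_a)^j(c, a), where (c,a) appends a to the n-tuple c and *_a acts coordinatewise. Then h'_a is a chain map with respect to the quandle boundary ∂, i.e. ∂ ∘ h'_a = h'_a ∘ ∂ in the quandle chain complex. -/
open Finset

/-- A tuple is degenerate when two consecutive entries are equal. -/
noncomputable def IsDegen {Q : Type*} {n : ℕ} (x : Fin n → Q) : Prop :=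
  ∃ i j : Fin n, (j : ℕ) = (i : ℕ) + 1 ∧ x i = x j

/-- The subgroup of degenerate chains of the free abelian group on `n`-tuples. -/
noncomputable def Degen (Q : Type*) (n : ℕ) : AddSubgroup ((Fin n → Q) →₀ ℤ) :=
  AddSubgroup.closure {c | ∃ x : Fin n → Q, IsDegen x ∧ c = Finsupp.single x 1}

/-- The quandle/rack boundary of a single `(n+1)`-tuple:
`∂(x₁,…,xₙ) = ∑_{i=2}^{n} (-1)^i [(x₁,…,x_{i-1},x_{i+1},…,xₙ)
 - (x₁*x_i,…,x_{i-1}*x_i,x_{i+1},…,xₙ)]` (written with 0-based indices). -/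
noncomputable def qd {Q : Type*} (op : Q → Q → Q) {n : ℕ} (x : Fin (n + 1) → Q) :
    (Fin n → Q) →₀ ℤ :=
  ∑ i : Fin (n + 1), if 1 ≤ (i : ℕ) then
    ((-1 : ℤ) ^ ((i : ℕ) + 1)) •
      (Finsupp.single
          (fun j : Fin n => if (j : ℕ) < (i : ℕ) then x j.castSucc else x j.succ) 1
        - Finsupp.single
          (fun j : Fin n =>
            if (j : ℕ) < (i : ℕ) then op (x j.castSucc) (x i) else x j.succ) 1)
  else 0

/-- Linear extension of the boundary to chains. -/
noncomputable def qboundary {Q : Type*} (op : Q → Q → Q) {n : ℕ}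
    (c : (Fin (n + 1) → Q) →₀ ℤ) : (Fin n → Q) →₀ ℤ :=
  c.sum fun x z => z • qd op x

section auxStmt16

variable {Q : Type*} (op : Q → Q → Q) (a : Q)

private lemma iter_pt {ι : Type*} (j : ℕ) (v : ι → Q) (i : ι) :
    (fun w : ι → Q => fun k => op (w k) a)^[j] v i = (fun y => op y a)^[j] (v i) := by
  induction j generalizing v with
  | zero => rfl
  | succ j ih =>
      rw [Function.iterate_succ_apply, Function.iterate_succ_apply]
      exact ih _

private lemma iter_fix (idem : op a a = a) (j : ℕ) : (fun y => op y a)^[j] a = a := by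
  induction j with
  | zero => rfl
  | succ j ih =>
      rw [Function.iterate_succ_apply]
      simpa [idem] using ih

private lemma iter_hom (dist : ∀ u v c, op (op u v) c = op (op u c) (op v c)) (j : ℕ)
    (u v : Q) :
    (fun y => op y a)^[j] (op u v)
      = op ((fun y => op y a)^[j] u) ((fun y => op y a)^[j] v) := by
  induction j generalizing u v with
  | zero => rfl
  | succ j ih =>
      rw [Function.iterate_succ_apply, Function.iterate_succ_apply,
        Function.iterate_succ_apply]
      show (fun y => op y a)^[j] (op (op u v) a) = _
      rw [dist]
      exact ih _ _

private lemma snoc_f (n : ℕ) (x : Fin (n+1) → Q) (i : Fin (n+1)) (j : ℕ) :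
    (fun k : Fin (n+1) => if (k:ℕ) < ((i.castSucc : Fin (n+2)):ℕ)
        then (fun v : Fin (n+2) → Q => fun t => op (v t) a)^[j] (Fin.snoc x a) k.castSucc
        else (fun v : Fin (n+2) → Q => fun t => op (v t) a)^[j] (Fin.snoc x a) k.succ)
    = (fun v : Fin (n+1) → Q => fun t => op (v t) a)^[j]
        (Fin.snoc (fun k : Fin n => if (k:ℕ) < (i:ℕ) then x k.castSucc else x k.succ) a) := by
  funext k
  simp only [iter_pt, Fin.coe_castSucc]
  induction k using Fin.lastCases with
  | last =>
      rw [if_neg (by simpa using Nat.not_lt.2 (Nat.le_of_lt_succ i.isLt)),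
        Fin.succ_last, Fin.snoc_last, Fin.snoc_last]
  | cast k =>
      rw [Fin.snoc_castSucc, Fin.succ_castSucc, Fin.snoc_castSucc, Fin.snoc_castSucc,
        Fin.coe_castSucc]
      split <;> rfl

private lemma snoc_g (dist : ∀ u v c, op (op u v) c = op (op u c) (op v c))
    (n : ℕ) (x : Fin (n+1) → Q) (i : Fin (n+1)) (j : ℕ) :
    (fun k : Fin (n+1) => if (k:ℕ) < ((i.castSucc : Fin (n+2)):ℕ)
        then op ((fun v : Fin (n+2) → Q => fun t => op (v t) a)^[j] (Fin.snoc x a) k.castSucc)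
          ((fun v : Fin (n+2) → Q => fun t => op (v t) a)^[j] (Fin.snoc x a) i.castSucc)
        else (fun v : Fin (n+2) → Q => fun t => op (v t) a)^[j] (Fin.snoc x a) k.succ)
    = (fun v : Fin (n+1) → Q => fun t => op (v t) a)^[j]
        (Fin.snoc (fun k : Fin n =>
          if (k:ℕ) < (i:ℕ) then op (x k.castSucc) (x i) else x k.succ) a) := by
  funext k
  simp only [iter_pt, Fin.coe_castSucc, Fin.snoc_castSucc]
  induction k using Fin.lastCases with
  | last =>
      rw [if_neg (by simpa using Nat.not_lt.2 (Nat.le_of_lt_succ i.isLt)),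
        Fin.succ_last, Fin.snoc_last, Fin.snoc_last]
  | cast k =>
      rw [Fin.succ_castSucc, Fin.snoc_castSucc, Fin.snoc_castSucc, Fin.coe_castSucc]
      split
      · rw [← iter_hom op a dist]
      · rfl

private lemma snoc_last_f (n : ℕ) (x : Fin (n+1) → Q) (j : ℕ) :
    (fun k : Fin (n+1) => if (k:ℕ) < ((Fin.last (n+1) : Fin (n+2)):ℕ)
        then (fun v : Fin (n+2) → Q => fun t => op (v t) a)^[j] (Fin.snoc x a) k.castSucc
        else (fun v : Fin (n+2) → Q => fun t => op (v t) a)^[j] (Fin.snoc x a) k.succ)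
    = (fun v : Fin (n+1) → Q => fun t => op (v t) a)^[j] x := by
  funext k
  simp only [iter_pt, Fin.val_last]
  rw [if_pos k.isLt, Fin.snoc_castSucc]

private lemma snoc_last_g (idem : op a a = a) (n : ℕ) (x : Fin (n+1) → Q) (j : ℕ) :
    (fun k : Fin (n+1) => if (k:ℕ) < ((Fin.last (n+1) : Fin (n+2)):ℕ)
        then op ((fun v : Fin (n+2) → Q => fun t => op (v t) a)^[j] (Fin.snoc x a) k.castSucc)
          ((fun v : Fin (n+2) → Q => fun t => op (v t) a)^[j] (Fin.snoc x a) (Fin.last (n+1)))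
        else (fun v : Fin (n+2) → Q => fun t => op (v t) a)^[j] (Fin.snoc x a) k.succ)
    = (fun v : Fin (n+1) → Q => fun t => op (v t) a)^[j+1] x := by
  funext k
  simp only [iter_pt, Fin.val_last, Fin.snoc_last]
  rw [if_pos k.isLt, Fin.snoc_castSucc, iter_fix op a idem, Function.iterate_succ_apply']

private lemma key_stmt16 (idem : op a a = a)
    (dist : ∀ u v c, op (op u v) c = op (op u c) (op v c))
    (m : ℕ) (hma : ∀ x : Q, (fun y => op y a)^[m] x = x)
    (n : ℕ) (x : Fin (n+1) → Q) :
    ∑ j ∈ Finset.range m,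
        qd op ((fun v : Fin (n+2) → Q => fun t => op (v t) a)^[j] (Fin.snoc x a))
    = ∑ i : Fin (n+1), (if 1 ≤ (i:ℕ) then ((-1:ℤ)^((i:ℕ)+1)) •
        ((∑ j ∈ Finset.range m, Finsupp.single
            ((fun v : Fin (n+1) → Q => fun t => op (v t) a)^[j]
              (Fin.snoc (fun k : Fin n =>
                if (k:ℕ) < (i:ℕ) then x k.castSucc else x k.succ) a)) (1:ℤ))
         - (∑ j ∈ Finset.range m, Finsupp.single
            ((fun v : Fin (n+1) → Q => fun t => op (v t) a)^[j]
              (Fin.snoc (fun k : Fin n =>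
                if (k:ℕ) < (i:ℕ) then op (x k.castSucc) (x i) else x k.succ) a)) (1:ℤ)))
       else 0) := by
  unfold qd
  rw [Finset.sum_comm]
  rw [Fin.sum_univ_castSucc]
  have hlast : ∑ j ∈ Finset.range m,
      (if 1 ≤ ((Fin.last (n+1) : Fin (n+2)) : ℕ) then
        ((-1:ℤ)^(((Fin.last (n+1) : Fin (n+2)) : ℕ)+1)) •
        (Finsupp.single (fun k : Fin (n+1) => if (k:ℕ) < ((Fin.last (n+1):Fin (n+2)):ℕ)
            then (fun v : Fin (n+2) → Q => fun t => op (v t) a)^[j] (Fin.snoc x a) k.castSucc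
            else (fun v : Fin (n+2) → Q => fun t => op (v t) a)^[j] (Fin.snoc x a) k.succ) (1:ℤ)
          - Finsupp.single (fun k : Fin (n+1) => if (k:ℕ) < ((Fin.last (n+1):Fin (n+2)):ℕ)
            then op ((fun v : Fin (n+2) → Q => fun t => op (v t) a)^[j] (Fin.snoc x a) k.castSucc)
              ((fun v : Fin (n+2) → Q => fun t => op (v t) a)^[j] (Fin.snoc x a) (Fin.last (n+1)))
            else (fun v : Fin (n+2) → Q => fun t => op (v t) a)^[j] (Fin.snoc x a) k.succ) (1:ℤ))
        else 0) = 0 := by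
    have h1 : ∀ j ∈ Finset.range m,
        (if 1 ≤ ((Fin.last (n+1) : Fin (n+2)) : ℕ) then
          ((-1:ℤ)^(((Fin.last (n+1) : Fin (n+2)) : ℕ)+1)) •
          (Finsupp.single (fun k : Fin (n+1) => if (k:ℕ) < ((Fin.last (n+1):Fin (n+2)):ℕ)
              then (fun v : Fin (n+2) → Q => fun t => op (v t) a)^[j] (Fin.snoc x a) k.castSucc
              else (fun v : Fin (n+2) → Q => fun t => op (v t) a)^[j] (Fin.snoc x a) k.succ) (1:ℤ)
            - Finsupp.single (fun k : Fin (n+1) => if (k:ℕ) < ((Fin.last (n+1):Fin (n+2)):ℕ)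
              then op ((fun v : Fin (n+2) → Q => fun t => op (v t) a)^[j] (Fin.snoc x a) k.castSucc)
                ((fun v : Fin (n+2) → Q => fun t => op (v t) a)^[j] (Fin.snoc x a) (Fin.last (n+1)))
              else (fun v : Fin (n+2) → Q => fun t => op (v t) a)^[j] (Fin.snoc x a) k.succ) (1:ℤ))
          else 0)
        = ((-1:ℤ)^(n+2)) •
          (Finsupp.single ((fun v : Fin (n+1) → Q => fun t => op (v t) a)^[j] x) (1:ℤ)
           - Finsupp.single ((fun v : Fin (n+1) → Q => fun t => op (v t) a)^[j+1] x) 1) := by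
      intro j _
      rw [if_pos (by simp), snoc_last_f op a n x j, snoc_last_g op a idem n x j]
      simp
    rw [Finset.sum_congr rfl h1, ← Finset.smul_sum, Finset.sum_range_sub']
    have : (fun v : Fin (n+1) → Q => fun t => op (v t) a)^[m] x = x := by
      funext t; rw [iter_pt]; exact hma _
    simp [this]
  rw [hlast, add_zero]
  refine Finset.sum_congr rfl fun i _ => ?_
  by_cases h : 1 ≤ (i : ℕ)
  · have h1 : ∀ j ∈ Finset.range m,
        (if 1 ≤ ((i.castSucc : Fin (n+2)) : ℕ) then
          ((-1:ℤ)^(((i.castSucc : Fin (n+2)) : ℕ)+1)) •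
          (Finsupp.single (fun k : Fin (n+1) => if (k:ℕ) < ((i.castSucc:Fin (n+2)):ℕ)
              then (fun v : Fin (n+2) → Q => fun t => op (v t) a)^[j] (Fin.snoc x a) k.castSucc
              else (fun v : Fin (n+2) → Q => fun t => op (v t) a)^[j] (Fin.snoc x a) k.succ) (1:ℤ)
            - Finsupp.single (fun k : Fin (n+1) => if (k:ℕ) < ((i.castSucc:Fin (n+2)):ℕ)
              then op ((fun v : Fin (n+2) → Q => fun t => op (v t) a)^[j] (Fin.snoc x a) k.castSucc)
                ((fun v : Fin (n+2) → Q => fun t => op (v t) a)^[j] (Fin.snoc x a) i.castSucc)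
              else (fun v : Fin (n+2) → Q => fun t => op (v t) a)^[j] (Fin.snoc x a) k.succ) (1:ℤ))
          else 0)
        = ((-1:ℤ)^((i:ℕ)+1)) •
          (Finsupp.single ((fun v : Fin (n+1) → Q => fun t => op (v t) a)^[j]
              (Fin.snoc (fun k : Fin n =>
                if (k:ℕ) < (i:ℕ) then x k.castSucc else x k.succ) a)) (1:ℤ)
           - Finsupp.single ((fun v : Fin (n+1) → Q => fun t => op (v t) a)^[j]
              (Fin.snoc (fun k : Fin n =>
                if (k:ℕ) < (i:ℕ) then op (x k.castSucc) (x i) else x k.succ) a)) 1) := by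
      intro j _
      rw [if_pos (by simpa using h), snoc_f op a n x i j, snoc_g op a dist n x i j]
      simp
    rw [Finset.sum_congr rfl h1, ← Finset.smul_sum, Finset.sum_sub_distrib, if_pos h]
  · simp only [Fin.coe_castSucc, if_neg h, Finset.sum_const_zero]

/-- The boundary as a linear map. -/
private noncomputable def Bmap (n : ℕ) :
    ((Fin (n + 1) → Q) →₀ ℤ) →ₗ[ℤ] ((Fin n → Q) →₀ ℤ) :=
  Finsupp.lsum ℤ (fun x => LinearMap.toSpanSingleton ℤ _ (qd op x))

/-- The homotopy-like map `h'` as a linear map. -/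
private noncomputable def Hmap (m : ℕ) (k : ℕ) :
    ((Fin k → Q) →₀ ℤ) →ₗ[ℤ] ((Fin (k + 1) → Q) →₀ ℤ) :=
  Finsupp.lsum ℤ (fun x => LinearMap.toSpanSingleton ℤ _
    (∑ j ∈ Finset.range m,
      Finsupp.single
        ((fun v : Fin (k + 1) → Q => fun i => op (v i) a)^[j] (Fin.snoc x a)) (1:ℤ)))

private lemma Bmap_eq (n : ℕ) (c : (Fin (n + 1) → Q) →₀ ℤ) :
    qboundary op c = Bmap op n c := by
  simp [qboundary, Bmap, Finsupp.sum, LinearMap.toSpanSingleton_apply]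

private lemma Hmap_eq (m k : ℕ) (c : (Fin k → Q) →₀ ℤ) :
    (c.sum fun x z => z •
        ∑ j ∈ Finset.range m,
          Finsupp.single
            ((fun v : Fin (k + 1) → Q => fun i => op (v i) a)^[j] (Fin.snoc x a)) (1:ℤ))
      = Hmap op a m k c := by
  simp [Hmap, Finsupp.sum, LinearMap.toSpanSingleton_apply]

private lemma comm_single (idem : op a a = a)
    (dist : ∀ u v c, op (op u v) c = op (op u c) (op v c))
    (m : ℕ) (hma : ∀ x : Q, (fun y => op y a)^[m] x = x)
    (n : ℕ) (x : Fin (n+1) → Q) (b : ℤ) :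
    Bmap op (n+1) (Hmap op a m (n+1) (Finsupp.single x b))
      = Hmap op a m n (Bmap op n (Finsupp.single x b)) := by
  have hH1 : Hmap op a m (n+1) (Finsupp.single x b)
      = b • ∑ j ∈ Finset.range m,
          Finsupp.single
            ((fun v : Fin (n+2) → Q => fun t => op (v t) a)^[j] (Fin.snoc x a)) (1:ℤ) := by
    rw [Hmap, Finsupp.lsum_single, LinearMap.toSpanSingleton_apply]
  have hB1 : Bmap op n (Finsupp.single x b) = b • qd op x := by
    rw [Bmap, Finsupp.lsum_single, LinearMap.toSpanSingleton_apply]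
  rw [hH1, hB1, map_smul, map_smul]
  congr 1
  show (Bmap op (n+1)) _ = _
  rw [Bmap]
  rw [map_sum]
  have hL : ∀ j ∈ Finset.range m,
      (Finsupp.lsum ℤ (fun y => LinearMap.toSpanSingleton ℤ _ (qd op y)))
        (Finsupp.single
          ((fun v : Fin (n+2) → Q => fun t => op (v t) a)^[j] (Fin.snoc x a)) (1:ℤ))
      = qd op ((fun v : Fin (n+2) → Q => fun t => op (v t) a)^[j] (Fin.snoc x a)) := by
    intro j _
    rw [Finsupp.lsum_single, LinearMap.toSpanSingleton_apply, one_smul]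
  rw [Finset.sum_congr rfl hL, key_stmt16 op a idem dist m hma n x]
  show _ = (Finsupp.lsum ℤ _) (qd op x)
  rw [qd, map_sum]
  refine Finset.sum_congr rfl fun i _ => ?_
  by_cases h : 1 ≤ (i : ℕ)
  · rw [if_pos h, if_pos h, map_smul, map_sub, Finsupp.lsum_single, Finsupp.lsum_single,
      LinearMap.toSpanSingleton_apply, LinearMap.toSpanSingleton_apply, one_smul, one_smul]
  · rw [if_neg h, if_neg h, map_zero]

end auxStmt16

/-- if `a` is an element of a quandle `(Q, op)` such that the
`m`-fold right translation by `a` is the identity, then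
`h'_a(c) = ∑_{j<m} (*_a)^j (c, a)` is a chain map: it commutes with `∂` in the
quandle chain complex (i.e. modulo degenerate chains). -/
theorem stmt16 {Q : Type*} (op : Q → Q → Q)
    (idem : ∀ a, op a a = a)
    (bij : ∀ b : Q, Function.Bijective fun a => op a b)
    (dist : ∀ a b c, op (op a b) c = op (op a c) (op b c))
    (a : Q) (m : ℕ) (hm : 0 < m)
    (hma : ∀ x : Q, (fun y => op y a)^[m] x = x) (n : ℕ) :
    let h' : ∀ k : ℕ, ((Fin k → Q) →₀ ℤ) → ((Fin (k + 1) → Q) →₀ ℤ) :=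
      fun k c => c.sum fun x z => z •
        ∑ j ∈ Finset.range m,
          Finsupp.single
            ((fun v : Fin (k + 1) → Q => fun i => op (v i) a)^[j] (Fin.snoc x a)) 1
    ∀ c : (Fin (n + 1) → Q) →₀ ℤ,
      qboundary op (h' (n + 1) c) - h' n (qboundary op c) ∈ Degen Q (n + 1) := by
  intro h' c
  have hcomm : (Bmap op (n+1)).comp (Hmap op a m (n+1))
      = (Hmap op a m n).comp (Bmap op n) := by
    apply Finsupp.lhom_ext
    intro x b
    exact comm_single op a (idem a) dist m hma n x b
  have h1 : h' (n+1) c = Hmap op a m (n+1) c := Hmap_eq op a m (n+1) c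
  have h2 : h' n (qboundary op c) = Hmap op a m n (qboundary op c) :=
    Hmap_eq op a m n (qboundary op c)
  rw [h1, h2, Bmap_eq op (n+1), Bmap_eq op n]
  have := congrArg (fun φ => φ c) hcomm
  simp only [LinearMap.comp_apply] at this
  rw [this, sub_self]
  exact zero_mem _
end

section
/- Let p = 2, n ≥ 1, m = 2^n + 1, and X = Z_2[t,t^{-1}]/(ξ_m(t)). With ξ_k = Σ_{i=0}^{k-1} t^i, the element C_3 = Σ_{k=0}^{m-1}(0, ξ_k, ξ_{k+1}) ∈ C_3^Q(X) is a quandle 3-cycle: ∂_3(C_3) = 0 in C_2^Q(X), where X carries the Alexander quandle operation x*y = tx + (1-t)y. -/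
set_option maxHeartbeats 2000000
set_option synthInstance.maxHeartbeats 1000000


open LaurentPolynomial Finset
open Finset

/-- `qd` on 3-tuples, computed explicitly. -/
lemma qd3 {Q : Type*} (op : Q → Q → Q) (x : Fin 3 → Q) :
    qd op x = (Finsupp.single ![x 0, x 2] 1 - Finsupp.single ![op (x 0) (x 1), x 2] 1)
      - (Finsupp.single ![x 0, x 1] 1 - Finsupp.single ![op (x 0) (x 2), op (x 1) (x 2)] 1) := by
  have e1 : (fun j : Fin 2 => if (j : ℕ) < ((1 : Fin 3) : ℕ) then x j.castSucc else x j.succ)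
      = ![x 0, x 2] := by funext j; fin_cases j <;> rfl
  have e2 : (fun j : Fin 2 => if (j : ℕ) < ((1 : Fin 3) : ℕ) then op (x j.castSucc) (x 1)
      else x j.succ) = ![op (x 0) (x 1), x 2] := by funext j; fin_cases j <;> rfl
  have e3 : (fun j : Fin 2 => if (j : ℕ) < ((2 : Fin 3) : ℕ) then x j.castSucc else x j.succ)
      = ![x 0, x 1] := by funext j; fin_cases j <;> rfl
  have e4 : (fun j : Fin 2 => if (j : ℕ) < ((2 : Fin 3) : ℕ) then op (x j.castSucc) (x 2)
      else x j.succ) = ![op (x 0) (x 2), op (x 1) (x 2)] := by funext j; fin_cases j <;> rfl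
  rw [qd, Fin.sum_univ_three, e1, e2, e3, e4]
  norm_num
  abel

/-- `qboundary` of a sum of singletons. -/
lemma qboundary_sum_single {Q : Type*} (op : Q → Q → Q) {n : ℕ} {ι : Type*} (s : Finset ι)
    (g : ι → (Fin (n + 1) → Q)) :
    qboundary op (∑ k ∈ s, Finsupp.single (g k) (1 : ℤ)) = ∑ k ∈ s, qd op (g k) := by
  let F : ((Fin (n + 1) → Q) →₀ ℤ) →+ ((Fin n → Q) →₀ ℤ) :=
    Finsupp.liftAddHom (fun x => zmultiplesHom _ (qd op x))
  have hF : ∀ c, qboundary op c = F c := by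
    intro c
    simp only [F, qboundary, Finsupp.liftAddHom_apply, Finsupp.sum, zmultiplesHom_apply]
  rw [hF, map_sum]
  refine Finset.sum_congr rfl fun k _ => ?_
  simp [F]

/-- for `m = 2ⁿ+1` and `X = Z_2[t,t⁻¹]/(ξ_m(t))` with the
Alexander operation `x*y = tx + (1-t)y`, the chain
`C₃ = ∑_{k=0}^{m-1} (0, ξ_k, ξ_{k+1})` is a quandle 3-cycle:
`∂₃(C₃) = 0` in `C₂^Q(X)`, i.e. `∂₃(C₃)` is a degenerate chain. -/
theorem stmt18 (n : ℕ) (hn : 0 < n) :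
    let m := 2 ^ n + 1
    let ξm : LaurentPolynomial (ZMod 2) := ∑ i ∈ Finset.range m, T 1 ^ i
    let t : LaurentPolynomial (ZMod 2) ⧸ Ideal.span {ξm} :=
      Ideal.Quotient.mk (Ideal.span {ξm}) (T 1)
    let op : (LaurentPolynomial (ZMod 2) ⧸ Ideal.span {ξm}) →
        (LaurentPolynomial (ZMod 2) ⧸ Ideal.span {ξm}) →
        (LaurentPolynomial (ZMod 2) ⧸ Ideal.span {ξm}) :=
      fun x y => t * x + (1 - t) * y
    let ξ : ℕ → LaurentPolynomial (ZMod 2) ⧸ Ideal.span {ξm} :=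
      fun k => ∑ i ∈ Finset.range k, t ^ i
    let C3 : (Fin 3 → LaurentPolynomial (ZMod 2) ⧸ Ideal.span {ξm}) →₀ ℤ :=
      ∑ k ∈ Finset.range m, Finsupp.single ![0, ξ k, ξ (k + 1)] 1
    qboundary op C3 ∈ Degen (LaurentPolynomial (ZMod 2) ⧸ Ideal.span {ξm}) 2 := by
  intro m ξm t op ξ C3
  -- characteristic 2
  have h2 : (1 + 1 : LaurentPolynomial (ZMod 2) ⧸ Ideal.span {ξm}) = 0 := by
    have hz : ((1 : ZMod 2) + 1) = 0 := by decide
    have hL : (1 + 1 : LaurentPolynomial (ZMod 2)) = 0 := by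
      rw [← map_one (LaurentPolynomial.C (R := ZMod 2)), ← map_add, hz, map_zero]
    calc (1 + 1 : LaurentPolynomial (ZMod 2) ⧸ Ideal.span {ξm})
        = Ideal.Quotient.mk (Ideal.span {ξm}) (1 + 1) := by rw [map_add, map_one]
      _ = 0 := by rw [hL, map_zero]
  -- basic facts on ξ and t
  have hξsucc : ∀ k, ξ (k + 1) = ξ k + t ^ k := fun k => Finset.sum_range_succ _ _
  have hξ0 : ξ 0 = 0 := Finset.sum_range_zero _
  have hξ1 : ξ 1 = 1 := by rw [hξsucc 0, hξ0, pow_zero, zero_add]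
  have htξ : ∀ k, t * ξ k + 1 = ξ (k + 1) := by
    intro k
    induction k with
    | zero => rw [hξ0, hξ1]; ring
    | succ k ih => rw [hξsucc k, hξsucc (k + 1), ← ih]; ring
  have hξm : ξ m = 0 := by
    show (∑ i ∈ Finset.range m, t ^ i) = 0
    have he : (∑ i ∈ Finset.range m, t ^ i)
        = Ideal.Quotient.mk (Ideal.span {ξm}) (∑ i ∈ Finset.range m, T 1 ^ i) := by
      rw [map_sum]
      exact Finset.sum_congr rfl fun i _ => (map_pow (Ideal.Quotient.mk (Ideal.span {ξm})) (T 1) i).symm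
    rw [he]
    exact Ideal.Quotient.eq_zero_iff_mem.mpr (Ideal.subset_span rfl)
  have htm : t ^ m = 1 := by
    have hmem : T 1 ^ m - 1 ∈ Ideal.span ({ξm} : Set (LaurentPolynomial (ZMod 2))) := by
      rw [← geom_sum_mul]
      exact Ideal.mul_mem_right _ _ (Ideal.subset_span rfl)
    have hz : Ideal.Quotient.mk (Ideal.span {ξm}) (T 1 ^ m - 1) = 0 :=
      Ideal.Quotient.eq_zero_iff_mem.mpr hmem
    have h' : t ^ m - 1 = 0 := by
      rw [← map_pow, ← map_one (Ideal.Quotient.mk (Ideal.span {ξm})), ← map_sub, hz]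
    exact sub_eq_zero.mp h'
  -- op facts
  have hop0 : ∀ y, op 0 y = (1 - t) * y := by intro y; show t * 0 + (1 - t) * y = _; ring
  have hopξ : ∀ k, op (ξ k) (ξ (k + 1)) = ξ (k + 2) := by
    intro k
    show t * ξ k + (1 - t) * ξ (k + 1) = ξ (k + 2)
    have h1 := htξ k
    have h2' := htξ (k + 1)
    linear_combination h1 - h2' + (ξ (k + 1) - ξ (k + 2)) * h2
  -- the telescoping function
  set f : ℕ → (Fin 2 → LaurentPolynomial (ZMod 2) ⧸ Ideal.span {ξm}) →₀ ℤ := fun k =>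
    Finsupp.single ![0, ξ k] 1 + Finsupp.single ![(1 - t) * ξ k, ξ (k + 1)] 1 with hf
  have hstep : ∀ k, qd op ![(0 : LaurentPolynomial (ZMod 2) ⧸ Ideal.span {ξm}), ξ k, ξ (k + 1)] = f (k + 1) - f k := by
    intro k
    rw [qd3]
    simp only [Matrix.cons_val_zero, Matrix.cons_val_one, Matrix.head_cons,
      Matrix.cons_val_two, Matrix.tail_cons, hop0, hopξ, hf]
    abel
  have hqb : qboundary op C3 = f m - f 0 := by
    rw [show C3 = ∑ k ∈ Finset.range m, Finsupp.single ![(0 : LaurentPolynomial (ZMod 2) ⧸ Ideal.span {ξm}), ξ k, ξ (k + 1)] (1 : ℤ) from rfl,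
      qboundary_sum_single op (Finset.range m) (fun k => ![(0 : LaurentPolynomial (ZMod 2) ⧸ Ideal.span {ξm}), ξ k, ξ (k + 1)])]
    rw [Finset.sum_congr rfl fun k _ => hstep k]
    exact Finset.sum_range_sub f m
  have hfm : f m = f 0 := by
    rw [hf]
    simp only [hξm, hξ0, hξ1, mul_zero, hξsucc m, htm, zero_add]
  rw [hqb, hfm, sub_self]
  exact zero_mem _
end
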